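/- arXiv:2206.10863 — 9 statements merged into one kernel-verified Lean document; each statement's English description precedes it below -/
import Mathlib

section
/- Let N ≥ 2 be an integer, 0 < R ≤ ∞, let V, W be positive C¹ functions on (0,R), and let f be a positive C² function on (0,R) satisfying the Bessel-pair equation (r^{N−1} V(r) f′(r))′ + r^{N−1} W(r) f(r) = 0 for all r ∈ (0,R). Then for every smooth function a : ℝ → ℝ with compact support contained in (0,R) one has the ground-state representation identity ∫_0^R V(r) a′(r)² (sinh r)^{N−1} dr = ∫_0^R W(r) a(r)² (sinh r)^{N−1} dr + ∫_0^R V(r) f(r)² ((a/f)′(r))² (sinh r)^{N−1} dr − (N−1) ∫_0^R V(r) (f′(r)/f(r)) (coth r − 1/r) a(r)² (sinh r)^{N−1} dr. -/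
open Real MeasureTheory
open scoped ENNReal

theorem stmt_0 (N : ℕ) (hN : 2 ≤ N) (R : ℝ≥0∞) (hR : 0 < R)
    (S : Set ℝ) (hS : S = {r : ℝ | 0 < r ∧ ENNReal.ofReal r < R})
    (V W f : ℝ → ℝ)
    (hV : ContDiffOn ℝ 1 V S) (hVpos : ∀ r ∈ S, 0 < V r)
    (hW : ContDiffOn ℝ 1 W S) (hWpos : ∀ r ∈ S, 0 < W r)
    (hf : ContDiffOn ℝ 2 f S) (hfpos : ∀ r ∈ S, 0 < f r)
    (hode : ∀ r ∈ S,
      deriv (fun s => s ^ (N - 1) * V s * deriv f s) r + r ^ (N - 1) * W r * f r = 0)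
    (a : ℝ → ℝ) (ha : ContDiff ℝ (⊤ : ℕ∞) a) (hac : HasCompactSupport a)
    (hsupp : tsupport a ⊆ S) :
    ∫ r in S, V r * (deriv a r) ^ 2 * Real.sinh r ^ (N - 1)
      = (∫ r in S, W r * (a r) ^ 2 * Real.sinh r ^ (N - 1))
        + (∫ r in S, V r * (f r) ^ 2 * (deriv (fun s => a s / f s) r) ^ 2
            * Real.sinh r ^ (N - 1))
        - ((N : ℝ) - 1) * ∫ r in S, V r * (deriv f r / f r)
            * (Real.cosh r / Real.sinh r - 1 / r) * (a r) ^ 2 * Real.sinh r ^ (N - 1) := by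
  obtain ⟨m, hm⟩ : ∃ m, N - 1 = m + 1 := ⟨N - 2, by omega⟩
  have hSopen : IsOpen S := by
    rw [hS]
    have h1 : {r : ℝ | 0 < r ∧ ENNReal.ofReal r < R}
        = Set.Ioi 0 ∩ ENNReal.ofReal ⁻¹' (Set.Iio R) := rfl
    rw [h1]
    exact isOpen_Ioi.inter (isOpen_Iio.preimage ENNReal.continuous_ofReal)
  set K := tsupport a with hKdef
  have hKS : K ⊆ S := hsupp
  have hKc : IsCompact K := hac
  -- facts off K
  have haK : ∀ r ∉ K, a r = 0 := fun r hr => image_eq_zero_of_notMem_tsupport hr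
  have haev : ∀ r ∉ K, a =ᶠ[nhds r] 0 := by
    intro r hr
    filter_upwards [(isClosed_tsupport a).isOpen_compl.mem_nhds hr] with x hx
    exact haK x hx
  have haK' : ∀ r ∉ K, deriv a r = 0 := by
    intro r hr
    rw [(haev r hr).deriv_eq]
    exact deriv_const r 0
  set g : ℝ → ℝ := fun s => a s / f s with hgdef
  have hgev : ∀ r ∉ K, g =ᶠ[nhds r] 0 := by
    intro r hr
    filter_upwards [haev r hr] with x hx
    simp only [hgdef, hx]
    simp
  have hgK : ∀ r ∉ K, g r = 0 := fun r hr => by simp [hgdef, haK r hr]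
  have hgK' : ∀ r ∉ K, deriv g r = 0 := by
    intro r hr
    rw [(hgev r hr).deriv_eq]
    exact deriv_const r 0
  -- differentiability facts on S
  have hfd : ∀ x ∈ S, HasDerivAt f (deriv f x) x := fun x hx =>
    ((hf.differentiableOn two_ne_zero).differentiableAt (hSopen.mem_nhds hx)).hasDerivAt
  have hfC1 : ContDiffOn ℝ 1 (deriv f) S := hf.deriv_of_isOpen hSopen (by norm_num)
  have hfd2 : ∀ x ∈ S, HasDerivAt (deriv f) (deriv (deriv f) x) x := fun x hx =>
    ((hfC1.differentiableOn one_ne_zero).differentiableAt (hSopen.mem_nhds hx)).hasDerivAt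
  have hVd : ∀ x ∈ S, HasDerivAt V (deriv V x) x := fun x hx =>
    ((hV.differentiableOn one_ne_zero).differentiableAt (hSopen.mem_nhds hx)).hasDerivAt
  have had : ∀ x : ℝ, HasDerivAt a (deriv a x) x := fun x =>
    ((ha.differentiable (by simp)) x).hasDerivAt
  have hgd : ∀ x ∈ S, HasDerivAt g
      ((deriv a x * f x - a x * deriv f x) / f x ^ 2) x := fun x hx =>
    (had x).div (hfd x hx) (hfpos x hx).ne'
  -- the integrands
  set T1 : ℝ → ℝ := fun r => V r * (deriv a r) ^ 2 * Real.sinh r ^ (N - 1) with hT1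
  set T2 : ℝ → ℝ := fun r => W r * (a r) ^ 2 * Real.sinh r ^ (N - 1) with hT2
  set T3 : ℝ → ℝ := fun r => V r * (f r) ^ 2 * (deriv g r) ^ 2 * Real.sinh r ^ (N - 1) with hT3
  set T4 : ℝ → ℝ := fun r => V r * (deriv f r / f r)
      * (Real.cosh r / Real.sinh r - 1 / r) * (a r) ^ 2 * Real.sinh r ^ (N - 1) with hT4
  have hT1K : ∀ r ∉ K, T1 r = 0 := fun r hr => by simp [hT1, haK' r hr]
  have hT2K : ∀ r ∉ K, T2 r = 0 := fun r hr => by simp [hT2, haK r hr]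
  have hT3K : ∀ r ∉ K, T3 r = 0 := fun r hr => by simp [hT3, hgK' r hr]
  have hT4K : ∀ r ∉ K, T4 r = 0 := fun r hr => by simp [hT4, haK r hr]
  -- continuity of the integrands
  have hcont : ∀ T : ℝ → ℝ, (∀ r ∉ K, T =ᶠ[nhds r] 0) →
      (∀ r ∈ S, ContinuousAt T r) → Continuous T := by
    intro T hTev hTS
    rw [continuous_iff_continuousAt]
    intro x
    by_cases hx : x ∈ S
    · exact hTS x hx
    · have hxK : x ∉ K := fun h => hx (hKS h)
      exact ContinuousAt.congr (continuousAt_const) (hTev x hxK).symm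
  have hVcont : ∀ r ∈ S, ContinuousAt V r := fun r hr =>
    (hV.continuousOn.continuousAt (hSopen.mem_nhds hr))
  have hWcont : ∀ r ∈ S, ContinuousAt W r := fun r hr =>
    (hW.continuousOn.continuousAt (hSopen.mem_nhds hr))
  have hfcont : ∀ r ∈ S, ContinuousAt f r := fun r hr =>
    (hf.continuousOn.continuousAt (hSopen.mem_nhds hr))
  have hf'cont : ∀ r ∈ S, ContinuousAt (deriv f) r := fun r hr =>
    (hfC1.continuousOn.continuousAt (hSopen.mem_nhds hr))
  have ha'cont : Continuous (deriv a) := ha.continuous_deriv (by simp)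
  have hsinhK : ∀ r ∈ S, Real.sinh r ≠ 0 := by
    intro r hr
    rw [hS] at hr
    exact (Real.sinh_pos_iff.mpr hr.1).ne'
  have hrne : ∀ r ∈ S, r ≠ 0 := by
    intro r hr
    rw [hS] at hr
    exact hr.1.ne'
  have hg'cont : ∀ r ∈ S, ContinuousAt (deriv g) r := by
    intro r hr
    have hev : deriv g =ᶠ[nhds r]
        (fun x => (deriv a x * f x - a x * deriv f x) / f x ^ 2) := by
      filter_upwards [hSopen.mem_nhds hr] with x hx
      exact (hgd x hx).deriv
    refine ContinuousAt.congr ?_ hev.symm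
    exact ((ha'cont.continuousAt.mul (hfcont r hr)).sub
      ((ha.continuous.continuousAt).mul (hf'cont r hr))).div
      ((hfcont r hr).pow 2) (pow_ne_zero 2 (hfpos r hr).ne')
  have hT1c : Continuous T1 := by
    refine hcont T1 (fun r hr => ?_) (fun r hr => ?_)
    · filter_upwards [((isClosed_tsupport a).isOpen_compl.mem_nhds hr)] with x hx
      simp [hT1, haK' x hx]
    · exact ((hVcont r hr).mul ((ha'cont.continuousAt).pow 2)).mul
        ((Real.continuous_sinh.continuousAt).pow _)
  have hT2c : Continuous T2 := by
    refine hcont T2 (fun r hr => ?_) (fun r hr => ?_)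
    · filter_upwards [haev r hr] with x hx
      simp [hT2, hx]
    · exact ((hWcont r hr).mul ((ha.continuous.continuousAt).pow 2)).mul
        ((Real.continuous_sinh.continuousAt).pow _)
  have hT3c : Continuous T3 := by
    refine hcont T3 (fun r hr => ?_) (fun r hr => ?_)
    · filter_upwards [((isClosed_tsupport a).isOpen_compl.mem_nhds hr)] with x hx
      simp [hT3, hgK' x hx]
    · exact (((hVcont r hr).mul ((hfcont r hr).pow 2)).mul ((hg'cont r hr).pow 2)).mul
        ((Real.continuous_sinh.continuousAt).pow _)
  have hT4c : Continuous T4 := by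
    refine hcont T4 (fun r hr => ?_) (fun r hr => ?_)
    · filter_upwards [haev r hr] with x hx
      simp [hT4, hx]
    · exact ((((hVcont r hr).mul ((hf'cont r hr).div (hfcont r hr) (hfpos r hr).ne')).mul
        (((Real.continuous_cosh.continuousAt).div (Real.continuous_sinh.continuousAt)
          (hsinhK r hr)).sub (continuousAt_const.div continuousAt_id (hrne r hr)))).mul
        ((ha.continuous.continuousAt).pow 2)).mul ((Real.continuous_sinh.continuousAt).pow _)
  -- compact support and integrability
  have hT1s : HasCompactSupport T1 := HasCompactSupport.intro hKc hT1K
  have hT2s : HasCompactSupport T2 := HasCompactSupport.intro hKc hT2K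
  have hT3s : HasCompactSupport T3 := HasCompactSupport.intro hKc hT3K
  have hT4s : HasCompactSupport T4 := HasCompactSupport.intro hKc hT4K
  have hT1i : Integrable T1 := hT1c.integrable_of_hasCompactSupport hT1s
  have hT2i : Integrable T2 := hT2c.integrable_of_hasCompactSupport hT2s
  have hT3i : Integrable T3 := hT3c.integrable_of_hasCompactSupport hT3s
  have hT4i : Integrable T4 := hT4c.integrable_of_hasCompactSupport hT4s
  -- the ground state function H and the combined integrand E
  set H : ℝ → ℝ := fun s => V s * f s * deriv f s * Real.sinh s ^ (N - 1) * (g s) ^ 2 with hH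
  set E : ℝ → ℝ := fun r => T1 r - T2 r - T3 r + ((N : ℝ) - 1) * T4 r with hE
  have hEcont : Continuous E := ((hT1c.sub hT2c).sub hT3c).add (continuous_const.mul hT4c)
  have hHK : ∀ r ∉ K, H r = 0 := fun r hr => by simp [hH, hgK r hr]
  have hEK : ∀ r ∉ K, E r = 0 := fun r hr => by
    simp [hE, hT1K r hr, hT2K r hr, hT3K r hr, hT4K r hr]
  have key : ∀ r : ℝ, HasDerivAt H (E r) r := by
    intro r
    by_cases hr : r ∈ S
    · -- the main computation
      have hr0 : 0 < r := by rw [hS] at hr; exact hr.1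
      have hfr : f r ≠ 0 := (hfpos r hr).ne'
      have hVr : V r ≠ 0 := (hVpos r hr).ne'
      have hs0 : Real.sinh r ≠ 0 := (Real.sinh_pos_iff.mpr hr0).ne'
      have hA := had r
      have hF := hfd r hr
      have hF2 := hfd2 r hr
      have hVD := hVd r hr
      have hG := hgd r hr
      have hsinh := (Real.hasDerivAt_sinh r).pow (N - 1)
      -- the ODE
      have hP : HasDerivAt (fun s => s ^ (N - 1) * V s * deriv f s)
          (((↑(N - 1) * r ^ (N - 1 - 1)) * V r + r ^ (N - 1) * deriv V r) * deriv f r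
            + r ^ (N - 1) * V r * deriv (deriv f) r) r :=
        ((hasDerivAt_pow (N - 1) r).mul hVD).mul hF2
      have heq := hode r hr
      rw [hP.deriv] at heq
      have hg2 := hG.pow 2
      have hHd := (((hVD.mul hF).mul hF2).mul hsinh).mul hg2
      convert hHd using 1
      · rfl
      · rfl
      · rfl
      -- prove E r equals the derivative value
      have hag : g r * f r = a r := div_mul_cancel₀ (a r) hfr
      have hgdv : deriv g r = (deriv a r * f r - a r * deriv f r) / f r ^ 2 := hG.deriv
      have hf'' : deriv (deriv f) r =
          (-(r ^ (N - 1) * W r * f r)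
            - ((↑(N - 1) * r ^ (N - 1 - 1)) * V r + r ^ (N - 1) * deriv V r) * deriv f r)
            / (r ^ (N - 1) * V r) := by
        rw [eq_div_iff (by positivity)]
        linarith [heq]
      have hNcast : (N : ℝ) - 1 = (m : ℝ) + 1 := by
        have hNm : N = m + 2 := by omega
        rw [hNm]; push_cast; ring
      simp only [hE, hT1, hT2, hT3, hT4]
      simp only [hgdv, hf'', ← hag, hNcast, hm]
      simp only [Nat.add_sub_cancel, pow_succ, Nat.cast_add, Nat.cast_one, pow_one,
        Nat.cast_ofNat, Pi.mul_apply, Pi.pow_apply]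
      field_simp
      ring
    · -- off the support
      have hrK : r ∉ K := fun h => hr (hKS h)
      have hHev : H =ᶠ[nhds r] 0 := by
        filter_upwards [hgev r hrK] with x hx
        simp [hH, hx]
      have hH0 : HasDerivAt H 0 r :=
        (hasDerivAt_const r (0 : ℝ)).congr_of_eventuallyEq hHev
      rw [hEK r hrK]
      exact hH0
  -- the integral of E is zero
  have hEzero : ∫ r, E r = 0 := by
    obtain ⟨M, hM⟩ := hKc.isBounded.subset_closedBall 0
    set b : ℝ := -(|M| + 1) with hb
    set c : ℝ := |M| + 1 with hc
    have hbc : ∀ x ∈ K, b < x ∧ x < c := by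
      intro x hx
      have h1 : |x| ≤ M := by simpa [Real.dist_eq] using hM hx
      have h2 := abs_le.mp (h1.trans (le_abs_self M))
      constructor
      · rw [hb]; linarith [h2.1]
      · rw [hc]; linarith [h2.2]
    have hble : b ≤ c := by
      have : (0 : ℝ) ≤ |M| + 1 := by positivity
      rw [hb, hc]; linarith
    have hbK : b ∉ K := fun h => absurd (hbc b h).1 (lt_irrefl b)
    have hcK : c ∉ K := fun h => absurd (hbc c h).2 (lt_irrefl c)
    have hint : ∫ x in b..c, E x = H c - H b :=
      intervalIntegral.integral_eq_sub_of_hasDerivAt (fun x _ => key x)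
        (hEcont.intervalIntegrable b c)
    have h2 : ∫ x in b..c, E x = ∫ x in Set.Ioc b c, E x :=
      intervalIntegral.integral_of_le hble
    have h3 : ∫ x in Set.Ioc b c, E x = ∫ x, E x := by
      refine setIntegral_eq_integral_of_forall_compl_eq_zero (fun x hx => ?_)
      refine hEK x (fun h => hx ?_)
      exact ⟨(hbc x h).1, le_of_lt (hbc x h).2⟩
    rw [← h3, ← h2, hint, hHK b hbK, hHK c hcK, sub_zero]
  -- assemble
  have hSK : ∀ T : ℝ → ℝ, (∀ r ∉ K, T r = 0) → ∫ r in S, T r = ∫ r, T r := by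
    intro T hTK
    exact setIntegral_eq_integral_of_forall_compl_eq_zero
      (fun x hx => hTK x (fun h => hx (hKS h)))
  have hsum : ∫ r, E r = (∫ r, T1 r) - (∫ r, T2 r) - (∫ r, T3 r)
      + ((N : ℝ) - 1) * (∫ r, T4 r) := by
    have hI123 : Integrable (fun r => T1 r - T2 r - T3 r) := (hT1i.sub hT2i).sub hT3i
    have hI12 : Integrable (fun r => T1 r - T2 r) := hT1i.sub hT2i
    have hI4 : Integrable (fun r => ((N : ℝ) - 1) * T4 r) := hT4i.const_mul _
    rw [hE]
    rw [integral_add hI123 hI4, integral_sub hI12 hT3i, integral_sub hT1i hT2i,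
      integral_const_mul]
  rw [hSK T1 hT1K, hSK T2 hT2K, hSK T3 hT3K, hSK T4 hT4K]
  rw [hsum] at hEzero
  linarith [hEzero]
end

section
/- Let N ≥ 2 be an integer, 0 < R ≤ ∞, let V, W be positive C¹ functions on (0,R), and let f be a positive C² function on (0,R) satisfying (r^{N−1} V(r) f′(r))′ + r^{N−1} W(r) f(r) = 0 on (0,R). Let j ≥ 0 and n ≥ j+1 be integers. Then for every smooth function a : ℝ → ℝ with compact support contained in (0,R): ∫_0^R V(r) a′(r)² (sinh r)^{N−1} dr + n(N+n−2) ∫_0^R V(r) a(r)² (sinh r)^{N−3} dr ≥ ∫_0^R W(r) a(r)² (sinh r)^{N−1} dr + (j+1)(N+j−1) ∫_0^R V(r) a(r)² (sinh r)^{N−3} dr + ∫_0^R V(r) f(r)² ((a/f)′(r))² (sinh r)^{N−1} dr − (N−1) ∫_0^R V(r) (f′(r)/f(r)) (coth r − 1/r) a(r)² (sinh r)^{N−1} dr. -/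
open Real MeasureTheory
open scoped ENNReal

theorem stmt_1 (N : ℕ) (hN : 2 ≤ N) (R : ℝ≥0∞) (hR : 0 < R)
    (S : Set ℝ) (hS : S = {r : ℝ | 0 < r ∧ ENNReal.ofReal r < R})
    (V W f : ℝ → ℝ)
    (hV : ContDiffOn ℝ 1 V S) (hVpos : ∀ r ∈ S, 0 < V r)
    (hW : ContDiffOn ℝ 1 W S) (hWpos : ∀ r ∈ S, 0 < W r)
    (hf : ContDiffOn ℝ 2 f S) (hfpos : ∀ r ∈ S, 0 < f r)
    (hode : ∀ r ∈ S,
      deriv (fun s => s ^ (N - 1) * V s * deriv f s) r + r ^ (N - 1) * W r * f r = 0)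
    (j n : ℕ) (hn : j + 1 ≤ n)
    (a : ℝ → ℝ) (ha : ContDiff ℝ (⊤ : ℕ∞) a) (hac : HasCompactSupport a)
    (hsupp : tsupport a ⊆ S) :
    (∫ r in S, V r * (deriv a r) ^ 2 * Real.sinh r ^ (N - 1))
      + ((n * (N + n - 2) : ℕ) : ℝ)
          * ∫ r in S, V r * (a r) ^ 2 * Real.sinh r ^ ((N : ℤ) - 3)
    ≥ (∫ r in S, W r * (a r) ^ 2 * Real.sinh r ^ (N - 1))
        + (((j + 1) * (N + j - 1) : ℕ) : ℝ)
            * (∫ r in S, V r * (a r) ^ 2 * Real.sinh r ^ ((N : ℤ) - 3))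
        + (∫ r in S, V r * (f r) ^ 2 * (deriv (fun s => a s / f s) r) ^ 2
            * Real.sinh r ^ (N - 1))
        - ((N : ℝ) - 1) * ∫ r in S, V r * (deriv f r / f r)
            * (Real.cosh r / Real.sinh r - 1 / r) * (a r) ^ 2 * Real.sinh r ^ (N - 1) := by
  -- basic setup
  have hSopen : IsOpen S := by
    rw [hS]
    exact isOpen_Ioi.inter (isOpen_Iio.preimage ENNReal.continuous_ofReal)
  set K := tsupport a with hK_def
  have hK : IsCompact K := hac
  have hKS : K ⊆ S := hsupp
  have hrpos : ∀ r ∈ S, 0 < r := by intro r hr; rw [hS] at hr; exact hr.1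
  have hshpos : ∀ r ∈ S, 0 < Real.sinh r := fun r hr => Real.sinh_pos_iff.2 (hrpos r hr)
  have hfne : ∀ r ∈ S, f r ≠ 0 := fun r hr => (hfpos r hr).ne'
  set v : ℝ → ℝ := fun s => a s / f s with hv_def
  set Q : ℝ → ℝ := fun s => V s * deriv f s with hQ_def
  -- smoothness
  have haS : ContDiffOn ℝ 1 a S := (ha.of_le (by simp)).contDiffOn
  have hfS : ContDiffOn ℝ 1 f S := hf.of_le (by norm_num)
  have hf'S : ContDiffOn ℝ 1 (deriv f) S := hf.deriv_of_isOpen hSopen (by norm_num)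
  have hvS : ContDiffOn ℝ 1 v S := haS.div hfS hfne
  have hQS : ContDiffOn ℝ 1 Q S := hV.mul hf'S
  have hdiffAt : ∀ (g : ℝ → ℝ), ContDiffOn ℝ 1 g S → ∀ r ∈ S, DifferentiableAt ℝ g r := by
    intro g hg r hr
    exact (hg.differentiableOn (by norm_num)).differentiableAt (hSopen.mem_nhds hr)

  -- functions
  set g1 : ℝ → ℝ := fun r => V r * (deriv a r) ^ 2 * Real.sinh r ^ (N - 1) with hg1_def
  set g2 : ℝ → ℝ := fun r => V r * (a r) ^ 2 * Real.sinh r ^ ((N : ℤ) - 3) with hg2_def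
  set g3 : ℝ → ℝ := fun r => W r * (a r) ^ 2 * Real.sinh r ^ (N - 1) with hg3_def
  set g4 : ℝ → ℝ := fun r => V r * (f r) ^ 2 * (deriv v r) ^ 2 * Real.sinh r ^ (N - 1)
    with hg4_def
  set g5 : ℝ → ℝ := fun r => V r * (deriv f r / f r) * (Real.cosh r / Real.sinh r - 1 / r)
    * (a r) ^ 2 * Real.sinh r ^ (N - 1) with hg5_def
  set G : ℝ → ℝ := fun r => g1 r - g3 r - g4 r + ((N : ℝ) - 1) * g5 r with hG_def
  set F : ℝ → ℝ := fun s => Q s * f s * v s ^ 2 * Real.sinh s ^ (N - 1) with hF_def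
  -- vanishing off K
  have haz : ∀ r ∉ K, a r = 0 := fun r hr => image_eq_zero_of_notMem_tsupport hr
  have hvz : ∀ r ∉ K, v r = 0 := by
    intro r hr; simp [hv_def, haz r hr]
  have hKopen : IsOpen Kᶜ := (isClosed_tsupport a).isOpen_compl
  have haev0 : ∀ r ∉ K, a =ᶠ[nhds r] (fun _ => (0:ℝ)) := by
    intro r hr
    exact Filter.eventuallyEq_of_mem (hKopen.mem_nhds hr) (fun x hx => haz x hx)
  have hvev0 : ∀ r ∉ K, v =ᶠ[nhds r] (fun _ => (0:ℝ)) := by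
    intro r hr
    exact Filter.eventuallyEq_of_mem (hKopen.mem_nhds hr) (fun x hx => hvz x hx)
  have hdaz : ∀ r ∉ K, deriv a r = 0 := by
    intro r hr; rw [(haev0 r hr).deriv_eq]; simp
  have hdvz : ∀ r ∉ K, deriv v r = 0 := by
    intro r hr; rw [(hvev0 r hr).deriv_eq]; simp
  have hG0 : ∀ r ∉ K, G r = 0 := by
    intro r hr
    simp [hG_def, hg1_def, hg3_def, hg4_def, hg5_def, haz r hr, hdaz r hr, hdvz r hr]
  have hF0 : ∀ r ∉ K, F r = 0 := by
    intro r hr; simp [hF_def, hvz r hr]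
  -- cast facts
  have hcast : ((N - 1 : ℕ) : ℝ) = (N : ℝ) - 1 := by
    rw [Nat.cast_sub (by omega : 1 ≤ N)]; simp
  obtain ⟨M, hM⟩ : ∃ M, N - 1 = M + 1 := ⟨N - 2, by omega⟩
  have hM' : N - 1 - 1 = M := by omega
  -- the key pointwise derivative identity on S
  have hkey : ∀ r ∈ S, HasDerivAt F (G r) r := by
    intro r hr
    have hr0 : r ≠ 0 := (hrpos r hr).ne'
    have hsh0 : Real.sinh r ≠ 0 := (hshpos r hr).ne'
    have hf0 : f r ≠ 0 := hfne r hr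
    have hfd := ((hdiffAt f hfS r hr)).hasDerivAt
    have hQd := ((hdiffAt Q hQS r hr)).hasDerivAt
    have hvd := ((hdiffAt v hvS r hr)).hasDerivAt
    have hsd := (Real.hasDerivAt_sinh r).pow (N - 1)
    have hF' : HasDerivAt F
        ((((deriv Q r) * f r + Q r * deriv f r) * v r ^ 2
            + (Q r * f r) * ((2 : ℕ) * v r ^ (2 - 1) * deriv v r)) * Real.sinh r ^ (N - 1)
          + (Q r * f r * v r ^ 2)
              * (((N - 1 : ℕ) : ℝ) * Real.sinh r ^ (N - 1 - 1) * Real.cosh r)) r :=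
      ((hQd.mul hfd).mul (hvd.pow 2)).mul hsd
    -- a = f * v on S
    have havn : ∀ s ∈ S, a s = f s * v s := by
      intro s hs
      rw [hv_def]
      field_simp [hfne s hs]
    have haev : a =ᶠ[nhds r] fun s => f s * v s :=
      Filter.eventuallyEq_of_mem (hSopen.mem_nhds hr) havn
    have hda : deriv a r = deriv f r * v r + f r * deriv v r := by
      rw [haev.deriv_eq]; exact (hfd.mul hvd).deriv
    have har : a r = f r * v r := havn r hr
    -- the ODE in terms of Q
    have hode' : deriv (fun s => s ^ (N - 1) * Q s) r + r ^ (N - 1) * W r * f r = 0 := by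
      have := hode r hr
      simpa only [hQ_def, mul_assoc] using this
    have hP : HasDerivAt (fun s => s ^ (N - 1) * Q s)
        (((N - 1 : ℕ) : ℝ) * r ^ (N - 1 - 1) * Q r + r ^ (N - 1) * deriv Q r) r := by
      exact (hasDerivAt_pow (N - 1) r).mul hQd
    rw [hP.deriv] at hode'
    have hqd : deriv Q r = -(W r * f r) - ((N : ℝ) - 1) * (Q r / r) := by
      rw [hM', hcast, hM, pow_succ] at hode'
      have h2 : r ^ M * (((N : ℝ) - 1) * Q r + r * deriv Q r + r * (W r * f r)) = 0 := by
        linear_combination hode'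
      have h3 : ((N : ℝ) - 1) * Q r + r * deriv Q r + r * (W r * f r) = 0 :=
        (mul_eq_zero.1 h2).resolve_left (pow_ne_zero M hr0)
      field_simp
      linarith
    -- conclude by algebra
    have hNM : (N : ℝ) = (M : ℝ) + 2 := by
      have hN2 : N = M + 2 := by omega
      rw [hN2]; push_cast; ring
    convert hF' using 1
    rw [hqd]
    simp only [hG_def, hg1_def, hg3_def, hg4_def, hg5_def, hqd, hda, har, hQ_def,
      hM', hM, pow_succ]
    simp only [Nat.add_sub_cancel, Nat.cast_add, Nat.cast_one]
    field_simp
    rw [hNM]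
    ring

  -- derivative identity everywhere
  have hkey2 : ∀ r, HasDerivAt F (G r) r := by
    intro r
    by_cases hr : r ∈ S
    · exact hkey r hr
    · have hrK : r ∉ K := fun h => hr (hKS h)
      have hFev : F =ᶠ[nhds r] (fun _ => (0:ℝ)) :=
        Filter.eventuallyEq_of_mem (hKopen.mem_nhds hrK) (fun x hx => hF0 x hx)
      have h0 : HasDerivAt F 0 r := (hasDerivAt_const r (0:ℝ)).congr_of_eventuallyEq hFev
      rw [hG0 r hrK]; exact h0
  have hFdiff : Differentiable ℝ F := fun r => (hkey2 r).differentiableAt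
  have hderivF : deriv F = G := funext fun r => (hkey2 r).deriv
  -- continuity on S
  have hconta : Continuous (deriv a) := ha.continuous_deriv (by simp)
  have hcv : ContinuousOn (deriv v) S := hvS.continuousOn_deriv_of_isOpen hSopen le_rfl
  have hsinhc : ContinuousOn (fun r : ℝ => Real.sinh r ^ (N - 1)) S :=
    Real.continuous_sinh.continuousOn.pow _
  have hg1c : ContinuousOn g1 S :=
    (hV.continuousOn.mul (hconta.continuousOn.pow 2)).mul hsinhc
  have hg3c : ContinuousOn g3 S :=
    (hW.continuousOn.mul (ha.continuous.continuousOn.pow 2)).mul hsinhc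
  have hg4c : ContinuousOn g4 S :=
    ((hV.continuousOn.mul (hfS.continuousOn.pow 2)).mul (hcv.pow 2)).mul hsinhc
  have hg5c : ContinuousOn g5 S := by
    refine ((((hV.continuousOn.mul
        (hf'S.continuousOn.div hfS.continuousOn hfne)).mul
        (ContinuousOn.sub
          (Real.continuous_cosh.continuousOn.div Real.continuous_sinh.continuousOn
            (fun r hr => (hshpos r hr).ne'))
          (continuousOn_const.div continuousOn_id (fun r hr => (hrpos r hr).ne')))).mul
        (ha.continuous.continuousOn.pow 2)).mul hsinhc)
  have hGc : ContinuousOn G S :=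
    ((hg1c.sub hg3c).sub hg4c).add (continuousOn_const.mul hg5c)
  have hGcont : Continuous G := by
    rw [continuous_iff_continuousAt]
    intro x
    by_cases hx : x ∈ S
    · exact hGc.continuousAt (hSopen.mem_nhds hx)
    · have hxK : x ∉ K := fun h => hx (hKS h)
      have hev : (fun _ => (0:ℝ)) =ᶠ[nhds x] G :=
        (Filter.eventuallyEq_of_mem (hKopen.mem_nhds hxK) (fun y hy => hG0 y hy)).symm
      exact continuousAt_const.congr hev
  have hFC1 : ContDiff ℝ 1 F := contDiff_one_iff_deriv.mpr ⟨hFdiff, by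
    rw [hderivF]; exact hGcont⟩
  have hFsupp : HasCompactSupport F := hac.mono' (by
    intro x hx
    by_contra h
    exact hx (hF0 x h))
  have hGsupp : HasCompactSupport G := hac.mono' (by
    intro x hx
    by_contra h
    exact hx (hG0 x h))
  have hGint : Integrable G := hGcont.integrable_of_hasCompactSupport hGsupp
  have hGint' : Integrable (deriv F) := by rw [hderivF]; exact hGint
  -- total integral of deriv F is zero
  have hintzero : ∫ r, G r = 0 := by
    have h1 : ∫ x in Set.Iic 0, deriv F x = F 0 :=
      HasCompactSupport.integral_Iic_deriv_eq hFC1 hFsupp 0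
    have h2 : ∫ x in Set.Ioi 0, deriv F x = -F 0 :=
      HasCompactSupport.integral_Ioi_deriv_eq hFC1 hFsupp 0
    have h3 := intervalIntegral.integral_Iic_add_Ioi (b := (0:ℝ)) hGint'.integrableOn hGint'.integrableOn
    rw [← hderivF, ← h3, h1, h2]
    ring
  have hSzero : ∫ r in S, G r = 0 := by
    rw [setIntegral_eq_integral_of_forall_compl_eq_zero
      (fun x hx => hG0 x (fun h => hx (hKS h)))]
    exact hintzero
  -- integrability of each piece on S
  have hIntOn : ∀ g : ℝ → ℝ, ContinuousOn g S → (∀ r ∉ K, g r = 0) → IntegrableOn g S := by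
    intro g hg hg0
    have h1 : IntegrableOn g K := (hg.mono hKS).integrableOn_compact hK
    have h2 : IntegrableOn g (S \ K) :=
      (integrableOn_zero).congr_fun (fun x hx => (hg0 x hx.2).symm)
        ((hSopen.measurableSet).diff (isClosed_tsupport a).measurableSet)
    exact (h1.union h2).mono_set (fun x hx => by
      by_cases h : x ∈ K
      · exact Or.inl h
      · exact Or.inr ⟨hx, h⟩)
  have hi1 : IntegrableOn g1 S := hIntOn g1 hg1c (fun r hr => by
    simp [hg1_def, hdaz r hr])
  have hi3 : IntegrableOn g3 S := hIntOn g3 hg3c (fun r hr => by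
    simp [hg3_def, haz r hr])
  have hi4 : IntegrableOn g4 S := hIntOn g4 hg4c (fun r hr => by
    simp [hg4_def, hdvz r hr])
  have hi5 : IntegrableOn g5 S := hIntOn g5 hg5c (fun r hr => by
    simp [hg5_def, haz r hr])
  have hsplit : ∫ r in S, G r
      = (∫ r in S, g1 r) - (∫ r in S, g3 r) - (∫ r in S, g4 r)
        + ((N:ℝ) - 1) * ∫ r in S, g5 r := by
    have e3 : Integrable (fun r => g1 r - g3 r) (volume.restrict S) := hi1.sub hi3
    have e1 : Integrable (fun r => g1 r - g3 r - g4 r) (volume.restrict S) := e3.sub hi4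
    have e2 : Integrable (fun r => ((N:ℝ) - 1) * g5 r) (volume.restrict S) := hi5.const_mul _
    simp only [hG_def]
    rw [integral_add e1 e2, integral_sub e3 hi4, integral_sub hi1 hi3, integral_const_mul]
  have hEq : (∫ r in S, g1 r)
      = (∫ r in S, g3 r) + (∫ r in S, g4 r) - ((N:ℝ) - 1) * ∫ r in S, g5 r := by
    rw [hsplit] at hSzero
    linarith
  have hI2 : 0 ≤ ∫ r in S, g2 r := by
    apply setIntegral_nonneg hSopen.measurableSet
    intro r hr
    have hz : (0:ℝ) < Real.sinh r ^ ((N:ℤ) - 3) := zpow_pos (hshpos r hr) _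
    exact mul_nonneg (mul_nonneg (hVpos r hr).le (sq_nonneg _)) hz.le
  have hcoef : (((j + 1) * (N + j - 1) : ℕ) : ℝ) ≤ ((n * (N + n - 2) : ℕ) : ℝ) := by
    have h : (j + 1) * (N + j - 1) ≤ n * (N + n - 2) := Nat.mul_le_mul hn (by omega)
    exact_mod_cast h
  rw [ge_iff_le]
  have hmul := mul_le_mul_of_nonneg_right hcoef hI2
  linarith [hEq, hmul]
end

section
/- Let N ≥ 2 be an integer, 0 ≤ λ ≤ ((N−1)/2)², γ = √((N−1)² − 4λ), h = (γ+1)/2, and define Ψ(r) = r^{−(N−2)/2} (sinh r / r)^{−(N−1+γ)/2} and W_λ(r) = λ + h²/r² + ((N−2)²/4 − h²)/sinh² r + ( γh/r + (N−1) Ψ′(r)/Ψ(r) ) (coth r − 1/r) for r > 0. Then Ψ is positive on (0,∞) and satisfies (r^{N−1} Ψ′(r))′ + r^{N−1} W_λ(r) Ψ(r) = 0 for all r > 0; that is, (r^{N−1}, r^{N−1} W_λ) is a Bessel pair on (0,∞) with positive solution Ψ. -/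
/-!
On `(0, ∞)` the function `Ψ` is `r ^ h * sinh r ^ b` with `b = -(N - 1 + γ) / 2`, whose logarithmic
derivative is `g = h / r + b coth r`. Writing `Ψ' = g Ψ` and `n = N - 1`, the Bessel equation
`(r ^ n Ψ')' + r ^ n W Ψ = 0` becomes the Riccati identity `(n / r) g + g² + g' + W = 0`, which is
a rational identity in `r`, `sinh r`, `cosh r` modulo `cosh² = 1 + sinh²` once
`4 λ = (N - 1)² - γ²` is substituted.
-/

open Real Filter Topology

noncomputable def rpowSinhLogDeriv (a b s : ℝ) : ℝ := a / s + b * (cosh s / sinh s)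

lemma rpow_mul_div_rpow {s t : ℝ} (hs : 0 < s) (ht : 0 ≤ t) (c b : ℝ) :
    s ^ c * (t / s) ^ b = s ^ (c - b) * t ^ b := by
  rw [div_rpow ht hs.le, rpow_sub hs]
  have : s ^ b ≠ 0 := (rpow_pos_of_pos hs b).ne'
  field_simp

lemma hasDerivAt_rpow_mul_sinh_rpow (a b : ℝ) {s : ℝ} (hs : 0 < s) :
    HasDerivAt (fun x => x ^ a * sinh x ^ b)
      (s ^ a * sinh s ^ b * rpowSinhLogDeriv a b s) s := by
  have hsinh : 0 < sinh s := sinh_pos_iff.2 hs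
  refine ((hasDerivAt_rpow_const (p := a) (Or.inl hs.ne')).mul
    ((hasDerivAt_sinh s).rpow_const (p := b) (Or.inl hsinh.ne'))).congr_deriv ?_
  rw [rpowSinhLogDeriv, rpow_sub_one hs.ne', rpow_sub_one hsinh.ne']
  field_simp

lemma hasDerivAt_rpowSinhLogDeriv (a b : ℝ) {s : ℝ} (hs : 0 < s) :
    HasDerivAt (rpowSinhLogDeriv a b) (-(a / s ^ 2) - b / sinh s ^ 2) s := by
  have hsinh : sinh s ≠ 0 := (sinh_pos_iff.2 hs).ne'
  refine (((hasDerivAt_const s a).div (hasDerivAt_id s) hs.ne').add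
    (((hasDerivAt_cosh s).div (hasDerivAt_sinh s) hsinh).const_mul b)).congr_deriv ?_
  simp only [id_eq]
  field_simp
  linear_combination (-b * s ^ 2) * cosh_sq' s

lemma hasDerivAt_pow_mul_deriv_of_logDeriv {f g : ℝ → ℝ} {g' r : ℝ} (n : ℕ) (hr : r ≠ 0)
    (hf : ∀ᶠ s in 𝓝 r, HasDerivAt f (f s * g s) s) (hg : HasDerivAt g g' r) :
    HasDerivAt (fun s => s ^ n * deriv f s)
      (r ^ n * f r * (n / r * g r + g r ^ 2 + g')) r := by
  have hd : (fun s => s ^ n * deriv f s) =ᶠ[𝓝 r] fun s => s ^ n * (f s * g s) :=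
    hf.mono fun s hs => by simp only [hs.deriv]
  refine (((hasDerivAt_pow n r).mul (hf.self_of_nhds.mul hg)).congr_of_eventuallyEq hd).congr_deriv
    ?_
  rcases n with _ | k
  · simp only [pow_zero, Pi.mul_apply]
    ring
  · simp only [pow_succ, Pi.mul_apply]
    push_cast
    field_simp
    ring

lemma riccati_identity {n γ h b lam r : ℝ} (hr : 0 < r) (hh : h = (γ + 1) / 2)
    (hb : b = -((n - 1 + γ) / 2)) (hlam : 4 * lam = (n - 1) ^ 2 - γ ^ 2) :
    (n - 1) / r * rpowSinhLogDeriv h b r + rpowSinhLogDeriv h b r ^ 2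
      + (-(h / r ^ 2) - b / sinh r ^ 2)
      + (lam + h ^ 2 / r ^ 2 + ((n - 2) ^ 2 / 4 - h ^ 2) / sinh r ^ 2
        + (γ * h / r + (n - 1) * rpowSinhLogDeriv h b r) * (cosh r / sinh r - 1 / r)) = 0 := by
  have hsinh : sinh r ≠ 0 := (sinh_pos_iff.2 hr).ne'
  subst hh hb
  rw [rpowSinhLogDeriv]
  field_simp
  linear_combination (4 * r ^ 2 * ((γ + 1) ^ 2 - (n - 2) ^ 2) - 8 * r ^ 2 * (γ + n - 1)) * cosh_sq' r
    + 4 * r ^ 2 * sinh r ^ 2 * hlam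

theorem stmt_3_general (N : ℕ) (hN : 2 ≤ N) (lam : ℝ)
    (hlam1 : lam ≤ (((N : ℝ) - 1) / 2) ^ 2)
    (γ h : ℝ) (hγ : γ = Real.sqrt (((N : ℝ) - 1) ^ 2 - 4 * lam)) (hh : h = (γ + 1) / 2)
    (Ψ Wl : ℝ → ℝ)
    (hΨ : Ψ = fun r : ℝ =>
      r ^ (-(((N : ℝ) - 2) / 2)) * (Real.sinh r / r) ^ (-(((N : ℝ) - 1 + γ) / 2)))
    (hWl : Wl = fun r : ℝ =>
      lam + h ^ 2 / r ^ 2 + (((N : ℝ) - 2) ^ 2 / 4 - h ^ 2) / Real.sinh r ^ 2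
        + (γ * h / r + ((N : ℝ) - 1) * (deriv Ψ r / Ψ r))
            * (Real.cosh r / Real.sinh r - 1 / r)) :
    (∀ r : ℝ, 0 < r → 0 < Ψ r) ∧
    ∀ r : ℝ, 0 < r →
      deriv (fun s => s ^ (N - 1) * deriv Ψ s) r + r ^ (N - 1) * Wl r * Ψ r = 0 := by
  set b := -(((N : ℝ) - 1 + γ) / 2)
  have hΨ_eq : ∀ s, 0 < s → Ψ s = s ^ h * sinh s ^ b := fun s hs => by
    simp only [hΨ]
    rw [rpow_mul_div_rpow hs (sinh_pos_iff.2 hs).le, show -(((N : ℝ) - 2) / 2) - b = h by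
      rw [hh]; ring]
  have hΨ_deriv : ∀ s, 0 < s → HasDerivAt Ψ (Ψ s * rpowSinhLogDeriv h b s) s := fun s hs => by
    rw [hΨ_eq s hs]
    exact (hasDerivAt_rpow_mul_sinh_rpow h b hs).congr_of_eventuallyEq
      (eventually_gt_nhds hs |>.mono hΨ_eq)
  have hΨ_pos : ∀ r, 0 < r → 0 < Ψ r := fun r hr => by
    have := sinh_pos_iff.2 hr
    rw [hΨ_eq r hr]
    positivity
  refine ⟨hΨ_pos, fun r hr => ?_⟩
  have hlam : 4 * lam = ((N : ℝ) - 1) ^ 2 - γ ^ 2 := by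
    rw [hγ, sq_sqrt (by linarith)]
    ring
  have hN1 : ((N - 1 : ℕ) : ℝ) = (N : ℝ) - 1 := by rw [Nat.cast_sub (by omega), Nat.cast_one]
  simp only [hWl]
  rw [(hasDerivAt_pow_mul_deriv_of_logDeriv (N - 1) hr.ne'
      ((eventually_gt_nhds hr).mono hΨ_deriv) (hasDerivAt_rpowSinhLogDeriv h b hr)).deriv,
    (hΨ_deriv r hr).deriv, mul_div_cancel_left₀ _ (hΨ_pos r hr).ne', hN1]
  linear_combination r ^ (N - 1) * Ψ r * riccati_identity hr hh rfl hlam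

theorem stmt_3 (N : ℕ) (hN : 2 ≤ N) (lam : ℝ)
    (hlam0 : 0 ≤ lam) (hlam1 : lam ≤ (((N : ℝ) - 1) / 2) ^ 2)
    (γ h : ℝ) (hγ : γ = Real.sqrt (((N : ℝ) - 1) ^ 2 - 4 * lam)) (hh : h = (γ + 1) / 2)
    (Ψ Wl : ℝ → ℝ)
    (hΨ : Ψ = fun r : ℝ =>
      r ^ (-(((N : ℝ) - 2) / 2)) * (Real.sinh r / r) ^ (-(((N : ℝ) - 1 + γ) / 2)))
    (hWl : Wl = fun r : ℝ =>
      lam + h ^ 2 / r ^ 2 + (((N : ℝ) - 2) ^ 2 / 4 - h ^ 2) / Real.sinh r ^ 2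
        + (γ * h / r + ((N : ℝ) - 1) * (deriv Ψ r / Ψ r))
            * (Real.cosh r / Real.sinh r - 1 / r)) :
    (∀ r : ℝ, 0 < r → 0 < Ψ r) ∧
    ∀ r : ℝ, 0 < r →
      deriv (fun s => s ^ (N - 1) * deriv Ψ s) r + r ^ (N - 1) * Wl r * Ψ r = 0 :=
  stmt_3_general N hN lam hlam1 γ h hγ hh Ψ Wl hΨ hWl
end

section
/- Let N ≥ 2 be an integer, 0 ≤ λ ≤ ((N−1)/2)², γ = √((N−1)² − 4λ), h = (γ+1)/2, Ψ(r) = r^{−(N−2)/2} (sinh r / r)^{−(N−1+γ)/2}, and let j ≥ 0 and n ≥ j+1 be integers. Then for every smooth function a : ℝ → ℝ with compact support contained in (0,∞): ∫_0^∞ a′(r)² (sinh r)^{N−1} dr + n(N+n−2) ∫_0^∞ a(r)² (sinh r)^{N−3} dr ≥ λ ∫_0^∞ a(r)² (sinh r)^{N−1} dr + h² ∫_0^∞ (a(r)²/r²) (sinh r)^{N−1} dr + (N²/4 − h² + j(N+j)) ∫_0^∞ a(r)² (sinh r)^{N−3} dr + γh ∫_0^∞ ((r coth r − 1)/r²) a(r)²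 (sinh r)^{N−1} dr + ∫_0^∞ Ψ(r)² ((a/Ψ)′(r))² (sinh r)^{N−1} dr. -/
open Real MeasureTheory

private lemma aux_alg (m j : ℕ) (Kr γ : ℝ)
    (r a0 a1 : ℝ) (hr : 0 < r) (hs : 0 < Real.sinh r) :
    a1^2 * Real.sinh r^(m+1)
      + Kr * (a0^2 * Real.sinh r^((m:ℤ)-1))
      - ((((m:ℝ)+1)^2 - γ^2)/4 * (a0^2 * Real.sinh r^(m+1))
        + ((γ+1)/2)^2 * (a0^2 / r^2 * Real.sinh r^(m+1))
        + (((m:ℝ)+2)^2/4 - ((γ+1)/2)^2 + (j:ℝ)*(((m:ℝ)+2)+(j:ℝ))) * (a0^2 * Real.sinh r^((m:ℤ)-1))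
        + γ*((γ+1)/2) * ((r*(Real.cosh r/Real.sinh r)-1)/r^2 * a0^2 * Real.sinh r^(m+1))
        + (a1 - a0*(((γ+1)/2)/r + (-(((m:ℝ)+1+γ)/2)) * Real.cosh r / Real.sinh r))^2 * Real.sinh r^(m+1))
    = ((((m:ℝ)+1) * Real.sinh r^m * Real.cosh r * (((γ+1)/2)/r + (-(((m:ℝ)+1+γ)/2)) * Real.cosh r / Real.sinh r)
          - Real.sinh r^(m+1) * (((γ+1)/2)/r^2 + (-(((m:ℝ)+1+γ)/2))/Real.sinh r^2)) * a0^2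
        + Real.sinh r^(m+1) * (((γ+1)/2)/r + (-(((m:ℝ)+1+γ)/2)) * Real.cosh r / Real.sinh r) * (2*a0*a1))
      + (Kr - (j:ℝ)*(((m:ℝ)+2)+(j:ℝ)) - (((m:ℝ)+2)-1)) * (a0^2 * Real.sinh r^((m:ℤ)-1)) := by
  have hz : Real.sinh r ^ ((m:ℤ)-1) = Real.sinh r ^ m / Real.sinh r := by
    rw [zpow_sub₀ hs.ne']; simp
  have hc : Real.cosh r ^ 2 = 1 + Real.sinh r ^ 2 := by
    have := Real.cosh_sq_sub_sinh_sq r; linarith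
  rw [hz]
  field_simp
  linear_combination (4 * Real.sinh r * Real.sinh r^m * a0^2 * r^2 * (((m:ℝ)+1)^2 - γ^2)) * hc

set_option maxHeartbeats 1000000 in
theorem stmt_4 (N : ℕ) (hN : 2 ≤ N) (lam : ℝ)
    (hlam0 : 0 ≤ lam) (hlam1 : lam ≤ (((N : ℝ) - 1) / 2) ^ 2)
    (γ h : ℝ) (hγ : γ = Real.sqrt (((N : ℝ) - 1) ^ 2 - 4 * lam)) (hh : h = (γ + 1) / 2)
    (Ψ : ℝ → ℝ)
    (hΨ : Ψ = fun r : ℝ =>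
      r ^ (-(((N : ℝ) - 2) / 2)) * (Real.sinh r / r) ^ (-(((N : ℝ) - 1 + γ) / 2)))
    (j n : ℕ) (hn : j + 1 ≤ n)
    (a : ℝ → ℝ) (ha : ContDiff ℝ (⊤ : ℕ∞) a) (hac : HasCompactSupport a)
    (hsupp : tsupport a ⊆ Set.Ioi (0 : ℝ)) :
    (∫ r in Set.Ioi (0 : ℝ), (deriv a r) ^ 2 * Real.sinh r ^ (N - 1))
      + ((n * (N + n - 2) : ℕ) : ℝ)
          * ∫ r in Set.Ioi (0 : ℝ), (a r) ^ 2 * Real.sinh r ^ ((N : ℤ) - 3)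
    ≥ lam * (∫ r in Set.Ioi (0 : ℝ), (a r) ^ 2 * Real.sinh r ^ (N - 1))
        + h ^ 2 * (∫ r in Set.Ioi (0 : ℝ), (a r) ^ 2 / r ^ 2 * Real.sinh r ^ (N - 1))
        + ((N : ℝ) ^ 2 / 4 - h ^ 2 + (j : ℝ) * ((N : ℝ) + (j : ℝ)))
            * (∫ r in Set.Ioi (0 : ℝ), (a r) ^ 2 * Real.sinh r ^ ((N : ℤ) - 3))
        + γ * h * (∫ r in Set.Ioi (0 : ℝ),
            (r * (Real.cosh r / Real.sinh r) - 1) / r ^ 2 * (a r) ^ 2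
              * Real.sinh r ^ (N - 1))
        + ∫ r in Set.Ioi (0 : ℝ), (Ψ r) ^ 2 * (deriv (fun s => a s / Ψ s) r) ^ 2
            * Real.sinh r ^ (N - 1) := by
  subst hh
  obtain ⟨m, rfl⟩ : ∃ m, N = m + 2 := ⟨N - 2, by omega⟩
  -- basic facts about γ and lam
  have hγnn : (0:ℝ) ≤ ((m:ℝ)+1)^2 - 4*lam := by
    push_cast at hlam1
    nlinarith [hlam1]
  have hγsq : γ^2 = ((m:ℝ)+1)^2 - 4*lam := by
    rw [hγ]
    rw [Real.sq_sqrt (by push_cast; nlinarith [hγnn] : (0:ℝ) ≤ ((↑(m+2) : ℝ) - 1) ^ 2 - 4 * lam)]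
    push_cast; ring
  have hlam_eq : lam = (((m:ℝ)+1)^2 - γ^2)/4 := by linarith
  -- abbreviations
  set q : ℝ := -(((m:ℝ)+1+γ)/2) with hq
  set G : ℝ → ℝ := fun x => ((γ+1)/2)/x + q * Real.cosh x / Real.sinh x with hG
  set F : ℝ → ℝ := fun x => Real.sinh x ^ (m+1) * G x * a x ^ 2 with hF
  set FD : ℝ → ℝ := fun x =>
    (((m:ℝ)+1) * Real.sinh x^m * Real.cosh x * G x
      - Real.sinh x^(m+1) * (((γ+1)/2)/x^2 + q/Real.sinh x^2)) * a x ^ 2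
    + Real.sinh x^(m+1) * G x * (2 * a x * deriv a x) with hFD
  have hsinh : ∀ x ∈ Set.Ioi (0:ℝ), 0 < Real.sinh x := fun x hx => Real.sinh_pos_iff.2 hx
  have hax : ∀ x : ℝ, HasDerivAt a (deriv a x) x :=
    fun x => (ha.differentiable (by simp)).differentiableAt.hasDerivAt
  -- derivative of Ψ
  have hΨd : ∀ x ∈ Set.Ioi (0:ℝ), HasDerivAt Ψ (Ψ x * G x) x := by
    intro r hr0
    have hr : (0:ℝ) < r := hr0
    have hs : 0 < Real.sinh r := hsinh r hr0
    have hsr : 0 < Real.sinh r / r := div_pos hs hr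
    have h1 : HasDerivAt (fun x : ℝ => x ^ (-(((↑(m+2) : ℝ) - 2) / 2)))
        (1 * (-(((↑(m+2) : ℝ) - 2) / 2)) * r ^ (-(((↑(m+2) : ℝ) - 2) / 2) - 1)) r :=
      (hasDerivAt_id r).rpow_const (Or.inl hr.ne')
    have h2 : HasDerivAt (fun x : ℝ => Real.sinh x / x)
        ((Real.cosh r * r - Real.sinh r * 1) / r ^ 2) r :=
      (Real.hasDerivAt_sinh r).div (hasDerivAt_id r) hr.ne'
    have h3 := h2.rpow_const (p := -(((↑(m+2) : ℝ) - 1 + γ) / 2)) (Or.inl hsr.ne')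
    have h4 : HasDerivAt (fun x : ℝ => x ^ (-(((↑(m+2) : ℝ) - 2) / 2)) * (Real.sinh x / x) ^ (-(((↑(m+2) : ℝ) - 1 + γ) / 2))) _ r := h1.mul h3
    rw [hΨ]
    convert h4 using 1
    simp only [hG, hq]
    rw [Real.rpow_sub_one hr.ne', Real.rpow_sub_one hsr.ne']
    push_cast
    field_simp
    ring
  have hΨpos : ∀ x ∈ Set.Ioi (0:ℝ), 0 < Ψ x := by
    intro r hr0
    have hr : (0:ℝ) < r := hr0
    rw [hΨ]
    exact mul_pos (Real.rpow_pos_of_pos hr _)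
      (Real.rpow_pos_of_pos (div_pos (hsinh r hr0) hr) _)
  -- derivative of a/Ψ
  have hvd : ∀ x ∈ Set.Ioi (0:ℝ),
      deriv (fun s => a s / Ψ s) x = (deriv a x - a x * G x) / Ψ x := by
    intro r hr0
    have hΨne := (hΨpos r hr0).ne'
    rw [((hax r).fun_div (hΨd r hr0) hΨne).deriv]
    field_simp
  -- derivative of F
  have hFd : ∀ x ∈ Set.Ioi (0:ℝ), HasDerivAt F (FD x) x := by
    intro r hr0
    have hr : (0:ℝ) < r := hr0
    have hs : 0 < Real.sinh r := hsinh r hr0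
    have h1 : HasDerivAt (fun y => Real.sinh y ^ (m+1))
        ((↑(m+1) : ℝ) * Real.sinh r ^ m * Real.cosh r) r := by
      have hp : HasDerivAt (fun y => Real.sinh y ^ (m+1)) _ r := (Real.hasDerivAt_sinh r).pow (m+1)
      simpa using hp
    have e1 : HasDerivAt (fun y:ℝ => ((γ+1)/2)/y) ((0 * r - ((γ+1)/2) * 1)/r^2) r :=
      (hasDerivAt_const r ((γ+1)/2)).div (hasDerivAt_id r) hr.ne'
    have e2 : HasDerivAt (fun y:ℝ => q * Real.cosh y / Real.sinh y)
        ((q * Real.sinh r * Real.sinh r - q * Real.cosh r * Real.cosh r)/Real.sinh r^2) r :=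
      ((Real.hasDerivAt_cosh r).const_mul q).div (Real.hasDerivAt_sinh r) hs.ne'
    have h2 : HasDerivAt G (-(((γ+1)/2)/r^2) - q/Real.sinh r^2) r := by
      have h12 : HasDerivAt (fun y : ℝ => ((γ+1)/2)/y + q * Real.cosh y / Real.sinh y) _ r := e1.add e2
      convert h12 using 1
      have hcs := Real.cosh_sq_sub_sinh_sq r
      field_simp
      linear_combination (-(r^2) * ((m:ℝ)+1+γ)) * hcs
    have h3 : HasDerivAt (fun y => a y ^ 2) (2 * a r ^ 1 * deriv a r) r := (hax r).pow 2
    have h4 : HasDerivAt (fun y => Real.sinh y ^ (m+1) * G y * a y ^ 2) _ r := (h1.mul h2).mul h3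
    convert h4 using 1
    simp only [hFD, Pi.mul_apply]
    push_cast
    ring
  -- support control
  have ha0 : ∀ x, x ∉ tsupport a → a x = 0 := fun x hx => image_eq_zero_of_notMem_tsupport hx
  have hd0 : ∀ x, x ∉ tsupport a → deriv a x = 0 := by
    intro x hx
    by_contra hne
    exact hx (support_deriv_subset (Function.mem_support.2 hne))
  have htsF : ∀ x, x ∉ tsupport a → F x = 0 := by
    intro x hx; simp [hF, ha0 x hx]
  have hdF0 : ∀ x, x ∉ tsupport a → deriv F x = 0 := by
    intro x hx
    by_contra hne
    have hFsupp : Function.support F ⊆ tsupport a := by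
      intro y hy
      by_contra hyn
      exact hy (htsF y hyn)
    have : tsupport F ⊆ tsupport a :=
      closure_minimal hFsupp (isClosed_tsupport a)
    exact hx (this (support_deriv_subset (Function.mem_support.2 hne)))
  -- integrability helper
  have compInt : ∀ (f : ℝ → ℝ), ContinuousOn f (Set.Ioi 0) →
      (∀ x, x ∉ tsupport a → f x = 0) → IntegrableOn f (Set.Ioi 0) := by
    intro f hf h0
    have hind : (Set.Ioi (0:ℝ)).indicator f = (tsupport a).indicator f := by
      ext x
      by_cases hx : x ∈ tsupport a
      · rw [Set.indicator_of_mem hx, Set.indicator_of_mem (hsupp hx)]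
      · rw [Set.indicator_of_notMem hx]
        by_cases hx2 : x ∈ Set.Ioi (0:ℝ) <;> simp [hx2, h0 x hx]
    rw [← integrable_indicator_iff measurableSet_Ioi, hind,
      integrable_indicator_iff (isClosed_tsupport a).measurableSet]
    exact (hf.mono hsupp).integrableOn_compact hac
  -- continuity facts
  have hca : Continuous a := ha.continuous
  have hcd : Continuous (deriv a) := ha.continuous_deriv (by simp)
  have hcsinhpow : Continuous (fun x : ℝ => Real.sinh x ^ (m+1)) := Real.continuous_sinh.pow _
  have hczpow : ContinuousOn (fun x : ℝ => Real.sinh x ^ ((m:ℤ)-1)) (Set.Ioi 0) :=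
    ContinuousOn.zpow₀ Real.continuous_sinh.continuousOn _
      (fun x hx => Or.inl (hsinh x hx).ne')
  have hcG : ContinuousOn G (Set.Ioi 0) := by
    apply ContinuousOn.add
    · exact continuousOn_const.div continuousOn_id (fun x hx => ne_of_gt hx)
    · exact ((continuousOn_const.mul Real.continuous_cosh.continuousOn).div
        Real.continuous_sinh.continuousOn (fun x hx => (hsinh x hx).ne'))
  -- the integrands
  have hInt1 : IntegrableOn (fun r => deriv a r ^ 2 * Real.sinh r ^ (m+1)) (Set.Ioi 0) :=
    compInt _ ((hcd.pow 2).continuousOn.mul hcsinhpow.continuousOn)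
      (fun x hx => by simp [hd0 x hx])
  have hInt2 : IntegrableOn (fun r => a r ^ 2 * Real.sinh r ^ (m+1)) (Set.Ioi 0) :=
    compInt _ ((hca.pow 2).continuousOn.mul hcsinhpow.continuousOn)
      (fun x hx => by simp [ha0 x hx])
  have hInt3 : IntegrableOn (fun r => a r ^ 2 * Real.sinh r ^ ((m:ℤ)-1)) (Set.Ioi 0) :=
    compInt _ ((hca.pow 2).continuousOn.mul hczpow)
      (fun x hx => by simp [ha0 x hx])
  have hInt4 : IntegrableOn (fun r => a r ^ 2 / r ^ 2 * Real.sinh r ^ (m+1)) (Set.Ioi 0) :=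
    compInt _ (((hca.pow 2).continuousOn.div (continuousOn_pow 2)
        (fun x hx => pow_ne_zero 2 (ne_of_gt hx))).mul hcsinhpow.continuousOn)
      (fun x hx => by simp [ha0 x hx])
  have hInt5 : IntegrableOn (fun r =>
      (r * (Real.cosh r / Real.sinh r) - 1) / r ^ 2 * a r ^ 2 * Real.sinh r ^ (m+1))
      (Set.Ioi 0) :=
    by
    apply compInt
    · apply ContinuousOn.mul
      · apply ContinuousOn.mul
        · apply ContinuousOn.div
          · exact (continuousOn_id.mul (Real.continuous_cosh.continuousOn.div
              Real.continuous_sinh.continuousOn (fun x hx => (hsinh x hx).ne'))).sub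
              continuousOn_const
          · exact continuousOn_pow 2
          · exact fun x hx => pow_ne_zero 2 (ne_of_gt hx)
        · exact (hca.pow 2).continuousOn
      · exact hcsinhpow.continuousOn
    · intro x hx; simp [ha0 x hx]
  have hInt6 : IntegrableOn (fun r =>
      (deriv a r - a r * G r) ^ 2 * Real.sinh r ^ (m+1)) (Set.Ioi 0) :=
    compInt _ (((hcd.continuousOn.sub (hca.continuousOn.mul hcG)).pow 2).mul
        hcsinhpow.continuousOn)
      (fun x hx => by simp [ha0 x hx, hd0 x hx])
  have hcFD : ContinuousOn FD (Set.Ioi 0) := by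
    simp only [hFD]
    apply ContinuousOn.add
    · apply ContinuousOn.mul
      · apply ContinuousOn.sub
        · exact ((continuousOn_const.mul (Real.continuous_sinh.pow m).continuousOn).mul
            Real.continuous_cosh.continuousOn).mul hcG
        · exact hcsinhpow.continuousOn.mul
            ((continuousOn_const.div (continuousOn_pow 2)
              (fun x hx => pow_ne_zero 2 (ne_of_gt hx))).add
             (continuousOn_const.div ((Real.continuous_sinh.pow 2).continuousOn)
              (fun x hx => pow_ne_zero 2 (hsinh x hx).ne')))
      · exact (hca.pow 2).continuousOn
    · exact (hcsinhpow.continuousOn.mul hcG).mul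
        ((continuousOn_const.mul hca.continuousOn).mul hcd.continuousOn)
  have hIntFD : IntegrableOn FD (Set.Ioi 0) :=
    compInt _ hcFD (fun x hx => by simp [hFD, ha0 x hx, hd0 x hx])
  -- ∫ FD over (0,∞) is zero
  have hFDzero : ∫ r in Set.Ioi (0:ℝ), FD r = 0 := by
    -- locate the support in a compact interval
    obtain ⟨ε, M, hε, hεM, hKIcc⟩ :
        ∃ ε M : ℝ, 0 < ε ∧ ε ≤ M ∧ tsupport a ⊆ Set.Icc ε M := by
      rcases (tsupport a).eq_empty_or_nonempty with hK | hK
      · exact ⟨1, 2, one_pos, by norm_num, by simp [hK]⟩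
      · refine ⟨sInf (tsupport a), sSup (tsupport a), hsupp (hac.sInf_mem hK), ?_, ?_⟩
        · obtain ⟨x, hx⟩ := hK
          exact le_trans (csInf_le hac.bddBelow hx) (le_csSup hac.bddAbove hx)
        · exact fun x hx => ⟨csInf_le hac.bddBelow hx, le_csSup hac.bddAbove hx⟩
    have hout : ∀ x, x ∉ Set.Icc ε M → x ∉ tsupport a := fun x hx hmem => hx (hKIcc hmem)
    have hderivF : ∀ x ∈ Set.Ioi (0:ℝ), deriv F x = FD x := fun x hx => (hFd x hx).deriv
    have h1 : ∫ r in Set.Ioi (0:ℝ), FD r = ∫ r in Set.Ioi (0:ℝ), deriv F r :=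
      setIntegral_congr_fun measurableSet_Ioi (fun x hx => (hderivF x hx).symm)
    have h2 : ∫ r in Set.Ioi (0:ℝ), deriv F r = ∫ r : ℝ, deriv F r := by
      apply setIntegral_eq_integral_of_forall_compl_eq_zero
      intro x hx
      apply hdF0
      intro hmem
      exact hx (hsupp hmem)
    have h3 : ∫ r in Set.Ioc (ε/2) (M+1), deriv F r = ∫ r : ℝ, deriv F r := by
      apply setIntegral_eq_integral_of_forall_compl_eq_zero
      intro x hx
      apply hdF0
      apply hout
      intro hmem
      simp only [Set.mem_Ioc, not_and_or, not_lt, not_le] at hx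
      rcases hx with hx | hx
      · linarith [hmem.1]
      · linarith [hmem.2]
    have hle : ε/2 ≤ M + 1 := by linarith
    have h4 : ∫ r in Set.Ioc (ε/2) (M+1), deriv F r = ∫ r in (ε/2)..(M+1), deriv F r :=
      (intervalIntegral.integral_of_le hle).symm
    have h5 : ∫ r in (ε/2)..(M+1), deriv F r = F (M+1) - F (ε/2) := by
      apply intervalIntegral.integral_deriv_eq_sub
      · intro x hx
        rw [Set.uIcc_of_le hle] at hx
        exact (hFd x (by simpa using lt_of_lt_of_le (by linarith) hx.1 : x ∈ Set.Ioi (0:ℝ))).differentiableAt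
      · apply ContinuousOn.intervalIntegrable
        apply ContinuousOn.congr (f := FD)
        · apply hcFD.mono
          rw [Set.uIcc_of_le hle]
          intro x hx
          exact lt_of_lt_of_le (by linarith) hx.1
        · intro x hx
          rw [Set.uIcc_of_le hle] at hx
          exact hderivF x (lt_of_lt_of_le (by linarith) hx.1)
    have hF1 : F (M+1) = 0 := htsF _ (hout _ (by simp only [Set.mem_Icc, not_and_or, not_le]; right; linarith))
    have hF2 : F (ε/2) = 0 := htsF _ (hout _ (by simp only [Set.mem_Icc, not_and_or, not_le]; left; linarith))
    rw [h1, h2, ← h3, h4, h5, hF1, hF2, sub_zero]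
  -- nonnegativity of the sinh^(m-1) integral
  have hI3 : 0 ≤ ∫ r in Set.Ioi (0:ℝ), a r ^ 2 * Real.sinh r ^ ((m:ℤ)-1) :=
    setIntegral_nonneg measurableSet_Ioi (fun x hx =>
      mul_nonneg (sq_nonneg _) (le_of_lt (zpow_pos (hsinh x hx) _)))
  -- normalize exponents in the goal
  simp only [show m+2-1 = m+1 from rfl,
    show ((m+2:ℕ):ℤ) - 3 = (m:ℤ)-1 by push_cast; ring]
  set Kr := ((n * (m + 2 + n - 2) : ℕ) : ℝ) with hKrdef
  set C : ℝ := ((m+2:ℕ):ℝ)^2/4 - ((γ+1)/2)^2 + (j:ℝ)*(((m+2:ℕ):ℝ)+(j:ℝ)) with hCdef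
  set Dc : ℝ := Kr - (j:ℝ)*(((m:ℝ)+2)+(j:ℝ)) - (((m:ℝ)+2)-1) with hDdef
  have hKreq : Kr = (n:ℝ) * ((m:ℝ) + (n:ℝ)) := by
    rw [hKrdef]
    have hmn : m + 2 + n - 2 = m + n := by omega
    rw [hmn]; push_cast; ring
  have hD0 : 0 ≤ Dc := by
    have hjn : (j:ℝ) + 1 ≤ (n:ℝ) := by exact_mod_cast hn
    have hj0 : (0:ℝ) ≤ j := Nat.cast_nonneg j
    have hm0 : (0:ℝ) ≤ m := Nat.cast_nonneg m
    rw [hDdef, hKreq]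
    nlinarith [mul_nonneg (by linarith : (0:ℝ) ≤ (n:ℝ)-(j:ℝ)-1) (by linarith : (0:ℝ) ≤ (n:ℝ)+(j:ℝ)+1),
      mul_nonneg hm0 (by linarith : (0:ℝ) ≤ (n:ℝ)-(j:ℝ)-1)]
  -- replace the last integral using the derivative computation
  have hI6eq : (∫ r in Set.Ioi (0:ℝ), Ψ r ^ 2 * (deriv (fun s => a s / Ψ s) r) ^ 2
        * Real.sinh r ^ (m+1))
      = ∫ r in Set.Ioi (0:ℝ), (deriv a r - a r * G r) ^ 2 * Real.sinh r ^ (m+1) := by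
    apply setIntegral_congr_fun measurableSet_Ioi
    intro x hx
    have hΨne := (hΨpos x hx).ne'
    simp only
    rw [hvd x hx]
    field_simp
  rw [ge_iff_le, hI6eq, ← sub_nonneg]
  have hA : IntegrableOn (fun r => deriv a r ^ 2 * Real.sinh r ^ (m+1)
      + Kr * (a r ^ 2 * Real.sinh r ^ ((m:ℤ)-1))) (Set.Ioi 0) :=
    hInt1.add (hInt3.const_mul Kr)
  have hB : IntegrableOn (fun r => lam * (a r ^ 2 * Real.sinh r ^ (m+1))
      + ((γ+1)/2) ^ 2 * (a r ^ 2 / r ^ 2 * Real.sinh r ^ (m+1))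
      + C * (a r ^ 2 * Real.sinh r ^ ((m:ℤ)-1))
      + γ * ((γ+1)/2) * ((r * (Real.cosh r / Real.sinh r) - 1) / r ^ 2 * a r ^ 2
          * Real.sinh r ^ (m+1))
      + (deriv a r - a r * G r) ^ 2 * Real.sinh r ^ (m+1)) (Set.Ioi 0) :=
    ((((hInt2.const_mul lam).add (hInt4.const_mul (((γ+1)/2)^2))).add
      (hInt3.const_mul C)).add (hInt5.const_mul (γ*((γ+1)/2)))).add hInt6
  have hLHS : ∫ r in Set.Ioi (0:ℝ), (deriv a r ^ 2 * Real.sinh r ^ (m+1)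
      + Kr * (a r ^ 2 * Real.sinh r ^ ((m:ℤ)-1)))
      = (∫ r in Set.Ioi (0:ℝ), deriv a r ^ 2 * Real.sinh r ^ (m+1))
        + Kr * ∫ r in Set.Ioi (0:ℝ), a r ^ 2 * Real.sinh r ^ ((m:ℤ)-1) := by
    rw [integral_add hInt1 (hInt3.const_mul Kr), integral_const_mul]
  have hRHS : ∫ r in Set.Ioi (0:ℝ), (lam * (a r ^ 2 * Real.sinh r ^ (m+1))
      + ((γ+1)/2) ^ 2 * (a r ^ 2 / r ^ 2 * Real.sinh r ^ (m+1))
      + C * (a r ^ 2 * Real.sinh r ^ ((m:ℤ)-1))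
      + γ * ((γ+1)/2) * ((r * (Real.cosh r / Real.sinh r) - 1) / r ^ 2 * a r ^ 2
          * Real.sinh r ^ (m+1))
      + (deriv a r - a r * G r) ^ 2 * Real.sinh r ^ (m+1))
      = lam * (∫ r in Set.Ioi (0:ℝ), a r ^ 2 * Real.sinh r ^ (m+1))
        + ((γ+1)/2) ^ 2 * (∫ r in Set.Ioi (0:ℝ), a r ^ 2 / r ^ 2 * Real.sinh r ^ (m+1))
        + C * (∫ r in Set.Ioi (0:ℝ), a r ^ 2 * Real.sinh r ^ ((m:ℤ)-1))
        + γ * ((γ+1)/2) * (∫ r in Set.Ioi (0:ℝ),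
            (r * (Real.cosh r / Real.sinh r) - 1) / r ^ 2 * a r ^ 2 * Real.sinh r ^ (m+1))
        + ∫ r in Set.Ioi (0:ℝ), (deriv a r - a r * G r) ^ 2 * Real.sinh r ^ (m+1) := by
    have hB2 : IntegrableOn (fun r => lam * (a r ^ 2 * Real.sinh r ^ (m+1))
        + ((γ+1)/2) ^ 2 * (a r ^ 2 / r ^ 2 * Real.sinh r ^ (m+1))) (Set.Ioi 0) :=
      (hInt2.const_mul lam).add (hInt4.const_mul (((γ+1)/2)^2))
    have hB3 : IntegrableOn (fun r => lam * (a r ^ 2 * Real.sinh r ^ (m+1))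
        + ((γ+1)/2) ^ 2 * (a r ^ 2 / r ^ 2 * Real.sinh r ^ (m+1))
        + C * (a r ^ 2 * Real.sinh r ^ ((m:ℤ)-1))) (Set.Ioi 0) :=
      hB2.add (hInt3.const_mul C)
    have hB4 : IntegrableOn (fun r => lam * (a r ^ 2 * Real.sinh r ^ (m+1))
        + ((γ+1)/2) ^ 2 * (a r ^ 2 / r ^ 2 * Real.sinh r ^ (m+1))
        + C * (a r ^ 2 * Real.sinh r ^ ((m:ℤ)-1))
        + γ * ((γ+1)/2) * ((r * (Real.cosh r / Real.sinh r) - 1) / r ^ 2 * a r ^ 2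
            * Real.sinh r ^ (m+1))) (Set.Ioi 0) :=
      hB3.add (hInt5.const_mul (γ*((γ+1)/2)))
    rw [integral_add hB4 hInt6, integral_add hB3 (hInt5.const_mul (γ*((γ+1)/2))),
      integral_add hB2 (hInt3.const_mul C),
      integral_add (hInt2.const_mul lam) (hInt4.const_mul (((γ+1)/2)^2)),
      integral_const_mul, integral_const_mul, integral_const_mul, integral_const_mul]
  have hEq : Set.EqOn (fun r => (deriv a r ^ 2 * Real.sinh r ^ (m+1)
        + Kr * (a r ^ 2 * Real.sinh r ^ ((m:ℤ)-1)))
      - (lam * (a r ^ 2 * Real.sinh r ^ (m+1))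
        + ((γ+1)/2) ^ 2 * (a r ^ 2 / r ^ 2 * Real.sinh r ^ (m+1))
        + C * (a r ^ 2 * Real.sinh r ^ ((m:ℤ)-1))
        + γ * ((γ+1)/2) * ((r * (Real.cosh r / Real.sinh r) - 1) / r ^ 2 * a r ^ 2
            * Real.sinh r ^ (m+1))
        + (deriv a r - a r * G r) ^ 2 * Real.sinh r ^ (m+1)))
      (fun r => FD r + Dc * (a r ^ 2 * Real.sinh r ^ ((m:ℤ)-1))) (Set.Ioi 0) := by
    intro x hx
    have hs := hsinh x hx
    have H := aux_alg m j Kr γ x (a x) (deriv a x) hx hs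
    simp only [hFD, hG, hq, hCdef, hDdef]
    rw [hlam_eq]
    push_cast
    push_cast at H
    linear_combination H
  have key : ((∫ r in Set.Ioi (0:ℝ), deriv a r ^ 2 * Real.sinh r ^ (m+1))
        + Kr * ∫ r in Set.Ioi (0:ℝ), a r ^ 2 * Real.sinh r ^ ((m:ℤ)-1))
      - (lam * (∫ r in Set.Ioi (0:ℝ), a r ^ 2 * Real.sinh r ^ (m+1))
        + ((γ+1)/2) ^ 2 * (∫ r in Set.Ioi (0:ℝ), a r ^ 2 / r ^ 2 * Real.sinh r ^ (m+1))
        + C * (∫ r in Set.Ioi (0:ℝ), a r ^ 2 * Real.sinh r ^ ((m:ℤ)-1))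
        + γ * ((γ+1)/2) * (∫ r in Set.Ioi (0:ℝ),
            (r * (Real.cosh r / Real.sinh r) - 1) / r ^ 2 * a r ^ 2 * Real.sinh r ^ (m+1))
        + ∫ r in Set.Ioi (0:ℝ), (deriv a r - a r * G r) ^ 2 * Real.sinh r ^ (m+1))
      = Dc * ∫ r in Set.Ioi (0:ℝ), a r ^ 2 * Real.sinh r ^ ((m:ℤ)-1) := by
    rw [← hLHS, ← hRHS, ← integral_sub hA hB,
      setIntegral_congr_fun measurableSet_Ioi hEq,
      integral_add hIntFD (hInt3.const_mul Dc), hFDzero, zero_add, integral_const_mul]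
  rw [key]
  exact mul_nonneg hD0 hI3
end

section
/- Let N ≥ 2 and n ≥ 1 be integers. Then for every smooth function a : ℝ → ℝ with compact support contained in (0,∞): ∫_0^∞ a′(r)² (sinh r)^{N−1} dr + n(N+n−2) ∫_0^∞ a(r)² (sinh r)^{N−3} dr ≥ (N²/4) ∫_0^∞ (a(r)²/r²) (sinh r)^{N−1} dr. -/
open Real MeasureTheory Set

noncomputable def fA (m : ℕ) (r : ℝ) : ℝ :=
  ((m : ℝ) + 2) / (2 * r) - ((m : ℝ) + 1) * Real.cosh r / Real.sinh r

noncomputable def FA (m : ℕ) (r : ℝ) : ℝ :=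
  ((m : ℝ) + 2) * (Real.sinh r ^ (m + 1) / (2 * r))
    - ((m : ℝ) + 1) * (Real.cosh r * Real.sinh r ^ m)

noncomputable def FA' (m : ℕ) (r : ℝ) : ℝ :=
  ((m : ℝ) + 2) / 2 *
      ((((m : ℝ) + 1) * Real.sinh r ^ m * Real.cosh r * r - Real.sinh r ^ (m + 1)) / r ^ 2)
    - ((m : ℝ) + 1) *
      (Real.sinh r ^ (m + 1) + (m : ℝ) * Real.sinh r ^ (m - 1) * Real.cosh r ^ 2)

lemma sinh_le_mul_cosh {r : ℝ} (hr : 0 ≤ r) : Real.sinh r ≤ r * Real.cosh r := by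
  have h : ∀ x ∈ Set.uIcc (0:ℝ) r, HasDerivAt (fun t => t * Real.cosh t - Real.sinh t)
      (x * Real.sinh x) x := by
    intro x _
    have := ((hasDerivAt_id x).mul (Real.hasDerivAt_cosh x)).sub (Real.hasDerivAt_sinh x)
    refine this.congr_deriv ?_
    simp only [id_eq]
    ring
  have hint : IntervalIntegrable (fun x => x * Real.sinh x) volume 0 r :=
    (continuous_id.mul Real.continuous_sinh).intervalIntegrable 0 r
  have heq := intervalIntegral.integral_eq_sub_of_hasDerivAt h hint
  have hnn : 0 ≤ ∫ x in (0:ℝ)..r, x * Real.sinh x := by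
    apply intervalIntegral.integral_nonneg hr
    intro x hx
    exact mul_nonneg hx.1 (Real.sinh_nonneg_iff.2 hx.1)
  rw [heq] at hnn
  simp at hnn
  nlinarith [hnn]

lemma hasDerivAt_FA (m : ℕ) {r : ℝ} (hr : 0 < r) : HasDerivAt (FA m) (FA' m r) r := by
  have h1 : HasDerivAt (fun x : ℝ => Real.sinh x ^ (m + 1))
      (((m : ℝ) + 1) * Real.sinh r ^ m * Real.cosh r) r := by
    have := (Real.hasDerivAt_sinh r).pow (m + 1)
    refine this.congr_deriv ?_
    simp
  have hd : HasDerivAt (fun x : ℝ => 2 * x) 2 r := by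
    simpa using (hasDerivAt_id r).const_mul (2:ℝ)
  have h2 : HasDerivAt (fun x : ℝ => Real.sinh x ^ (m + 1) / (2 * x))
      (((((m : ℝ) + 1) * Real.sinh r ^ m * Real.cosh r) * (2 * r)
        - Real.sinh r ^ (m + 1) * 2) / (2 * r) ^ 2) r :=
    h1.div hd (by positivity)
  have h3 : HasDerivAt (fun x : ℝ => Real.cosh x * Real.sinh x ^ m)
      (Real.sinh r * Real.sinh r ^ m
        + Real.cosh r * ((m : ℝ) * Real.sinh r ^ (m - 1) * Real.cosh r)) r :=
    (Real.hasDerivAt_cosh r).mul ((Real.hasDerivAt_sinh r).pow m)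
  have := (h2.const_mul ((m : ℝ) + 2)).sub (h3.const_mul ((m : ℝ) + 1))
  refine this.congr_deriv ?_
  unfold FA'
  field_simp
  ring

lemma FA_eq (m : ℕ) {r : ℝ} (hr : 0 < r) : FA m r = fA m r * Real.sinh r ^ (m + 1) := by
  have hs : 0 < Real.sinh r := Real.sinh_pos_iff.2 hr
  unfold FA fA
  field_simp
  ring

lemma keyIneq (m : ℕ) {r : ℝ} (hr : 0 < r) :
    ((m : ℝ) + 2) ^ 2 / 4 * (Real.sinh r ^ (m + 1) / r ^ 2)
      ≤ -(FA' m r) - (fA m r) ^ 2 * Real.sinh r ^ (m + 1)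
        + ((m : ℝ) + 1) * Real.sinh r ^ ((m : ℤ) - 1) := by
  have hs : 0 < Real.sinh r := Real.sinh_pos_iff.2 hr
  have hc : Real.cosh r ^ 2 = 1 + Real.sinh r ^ 2 := Real.cosh_sq' r
  have hrc : Real.sinh r ≤ r * Real.cosh r := sinh_le_mul_cosh hr.le
  unfold FA' fA
  set s := Real.sinh r with hsdef
  set c := Real.cosh r with hcdef
  have he : (0:ℝ) < s ^ ((m : ℤ) - 1) := zpow_pos hs _
  set e := s ^ ((m : ℤ) - 1) with hedef
  have h1 : s ^ m = e * s := by
    rw [hedef, ← zpow_natCast s m, sub_eq_add_neg, zpow_add₀ hs.ne', zpow_neg, zpow_one]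
    field_simp
  have h2 : s ^ (m + 1) = e * s ^ 2 := by
    rw [pow_succ, h1]; ring
  have h3 : (m : ℝ) * s ^ (m - 1 : ℕ) = (m : ℝ) * e := by
    rcases Nat.eq_zero_or_pos m with hm | hm
    · simp [hm]
    · congr 1
      rw [hedef, ← zpow_natCast s (m - 1)]
      congr 1
      omega
  rw [h2, h3, h1]
  have hsq : (((m:ℝ)+2)/(2*r) - ((m:ℝ)+1)*c/s)^2 * (e * s^2)
      = (((m:ℝ)+2)/(2*r))^2 * e * s^2 - ((m:ℝ)+2)*((m:ℝ)+1)*c*s*e/r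
        + ((m:ℝ)+1)^2 * c^2 * e := by
    field_simp
    ring
  rw [hsq, hc]
  have hB : -(((m : ℝ) + 2) / 2 *
        ((((m : ℝ) + 1) * (e * s) * c * r - e * s ^ 2) / r ^ 2)
      - ((m : ℝ) + 1) * (e * s ^ 2 + (m : ℝ) * e * (1 + s ^ 2)))
      - ((((m:ℝ)+2)/(2*r))^2 * e * s^2 - ((m:ℝ)+2)*((m:ℝ)+1)*c*s*e/r
        + ((m:ℝ)+1)^2 * (1 + s ^ 2) * e)
      + ((m : ℝ) + 1) * e
      - ((m : ℝ) + 2) ^ 2 / 4 * (e * s ^ 2 / r ^ 2)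
      = ((m:ℝ)+2) * ((m:ℝ)+1) * e / (2*r^2) * (s*(r*c - s)) := by
    field_simp
    ring
  have h0 : 0 ≤ ((m:ℝ)+2) * ((m:ℝ)+1) * e / (2*r^2) * (s*(r*c - s)) := by
    apply mul_nonneg (by positivity)
    have h4 : 0 ≤ r * c - s := by linarith
    exact mul_nonneg hs.le h4
  linarith [hB ▸ h0]

theorem stmt_5 (N : ℕ) (hN : 2 ≤ N) (n : ℕ) (hn : 1 ≤ n)
    (a : ℝ → ℝ) (ha : ContDiff ℝ (⊤ : ℕ∞) a) (hac : HasCompactSupport a)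
    (hsupp : tsupport a ⊆ Set.Ioi (0 : ℝ)) :
    (∫ r in Set.Ioi (0 : ℝ), (deriv a r) ^ 2 * Real.sinh r ^ (N - 1))
      + ((n * (N + n - 2) : ℕ) : ℝ)
          * (∫ r in Set.Ioi (0 : ℝ), (a r) ^ 2 * Real.sinh r ^ ((N : ℤ) - 3))
    ≥ (N : ℝ) ^ 2 / 4 * ∫ r in Set.Ioi (0 : ℝ), (a r) ^ 2 / r ^ 2
        * Real.sinh r ^ (N - 1) := by
  obtain ⟨m, rfl⟩ : ∃ m, N = m + 2 := ⟨N - 2, by omega⟩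
  -- basic continuity and differentiability facts
  have hca : Continuous a := ha.continuous
  have hcd : Continuous (deriv a) := ha.continuous_deriv (by simp)
  have hda : ∀ x, HasDerivAt a (deriv a x) x :=
    fun x => ((ha.differentiable (by simp)) x).hasDerivAt
  -- support bounds
  set K : Set ℝ := insert 1 (tsupport a) with hKdef
  have hKc : IsCompact K := hac.insert 1
  have hKsub : K ⊆ Set.Ioi 0 := Set.insert_subset (by norm_num) hsupp
  have hKne : K.Nonempty := ⟨1, Set.mem_insert _ _⟩
  set ε := sInf K with hεdef
  set M := sSup K with hMdef
  have hεK : ε ∈ K := hKc.sInf_mem hKne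
  have hε : 0 < ε := hKsub hεK
  have hKicc : K ⊆ Set.Icc ε M :=
    fun x hx => ⟨csInf_le hKc.bddBelow hx, le_csSup hKc.bddAbove hx⟩
  have hεM : ε ≤ M := (hKicc hεK).2
  set α := ε / 2 with hαdef
  set β := M + 1 with hβdef
  have hα : 0 < α := by positivity
  have hαε : α < ε := by rw [hαdef]; linarith
  have hMβ : M < β := by rw [hβdef]; linarith
  have hαβ : α < β := by linarith
  have huIcc : Set.uIcc α β = Set.Icc α β := Set.uIcc_of_le hαβ.le
  have hmem : ∀ x ∈ Set.Icc α β, 0 < x := fun x hx => lt_of_lt_of_le hα hx.1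
  have ha0 : ∀ x, x ∉ Set.Icc ε M → a x = 0 := by
    intro x hx
    apply image_eq_zero_of_notMem_tsupport
    intro hxt
    exact hx (hKicc (Set.mem_insert_of_mem _ hxt))
  have hd0 : ∀ x, x ∉ Set.Icc ε M → deriv a x = 0 := by
    intro x hx
    by_contra h
    exact hx (hKicc (Set.mem_insert_of_mem _ (support_deriv_subset (by simpa using h))))
  have haα : a α = 0 := ha0 α (fun h => absurd h.1 (by linarith))
  have haβ : a β = 0 := ha0 β (fun h => absurd h.2 (by linarith))
  have hdiff : ∀ x ∈ Set.Ioi (0:ℝ) \ Set.Ioc α β, x ∉ Set.Icc ε M := by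
    rintro x ⟨hx1, hx2⟩ ⟨h1, h2⟩
    simp only [Set.mem_Ioc, not_and_or, not_lt, not_le] at hx2
    rcases hx2 with h | h
    · linarith
    · linarith
  -- convert set integrals to interval integrals
  have hconv : ∀ g : ℝ → ℝ, (∀ x ∈ Set.Ioi (0:ℝ) \ Set.Ioc α β, g x = 0) →
      ∫ r in Set.Ioi (0:ℝ), g r = ∫ r in α..β, g r := by
    intro g hg
    rw [intervalIntegral.integral_of_le hαβ.le]
    exact setIntegral_eq_of_subset_of_forall_diff_eq_zero measurableSet_Ioi
      (fun x hx => lt_trans hα hx.1) hg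
  have hm1 : m + 2 - 1 = m + 1 := by omega
  have hexp : ((m + 2 : ℕ) : ℤ) - 3 = (m : ℤ) - 1 := by push_cast; ring
  have hcast : ((m + 2 : ℕ) : ℝ) = (m : ℝ) + 2 := by push_cast; ring
  rw [hm1, hexp, hcast, ge_iff_le]
  have hg1 : ∫ r in Set.Ioi (0:ℝ), (deriv a r)^2 * Real.sinh r ^ (m+1)
      = ∫ r in α..β, (deriv a r)^2 * Real.sinh r ^ (m+1) :=
    hconv _ (fun x hx => by rw [hd0 x (hdiff x hx)]; ring)
  have hg2 : ∫ r in Set.Ioi (0:ℝ), (a r)^2 * Real.sinh r ^ ((m:ℤ)-1)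
      = ∫ r in α..β, (a r)^2 * Real.sinh r ^ ((m:ℤ)-1) :=
    hconv _ (fun x hx => by rw [ha0 x (hdiff x hx)]; ring)
  have hg3 : ∫ r in Set.Ioi (0:ℝ), (a r)^2 / r^2 * Real.sinh r ^ (m+1)
      = ∫ r in α..β, (a r)^2 / r^2 * Real.sinh r ^ (m+1) :=
    hconv _ (fun x hx => by rw [ha0 x (hdiff x hx)]; ring)
  rw [hg1, hg2, hg3]
  -- continuity facts on [α, β]
  have hsne : ∀ x ∈ Set.Icc α β, Real.sinh x ≠ 0 :=
    fun x hx => (Real.sinh_pos_iff.2 (hmem x hx)).ne'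
  have hcfA : ContinuousOn (fA m) (Set.Icc α β) := by
    unfold fA
    apply ContinuousOn.sub
    · exact continuousOn_const.div (by fun_prop)
        (fun x hx => by have := hmem x hx; positivity)
    · exact (continuousOn_const.mul Real.continuous_cosh.continuousOn).div
        Real.continuous_sinh.continuousOn hsne
  have hcFA : ContinuousOn (FA m) (Set.Icc α β) := by
    unfold FA
    apply ContinuousOn.sub
    · exact continuousOn_const.mul ((by fun_prop : ContinuousOn
        (fun r : ℝ => Real.sinh r ^ (m+1)) (Set.Icc α β)).div (by fun_prop)
        (fun x hx => by have := hmem x hx; positivity))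
    · fun_prop
  have hcFA' : ContinuousOn (FA' m) (Set.Icc α β) := by
    unfold FA'
    apply ContinuousOn.sub
    · exact continuousOn_const.mul ((by fun_prop : ContinuousOn
        (fun r : ℝ => ((m : ℝ) + 1) * Real.sinh r ^ m * Real.cosh r * r
          - Real.sinh r ^ (m+1)) (Set.Icc α β)).div (by fun_prop)
        (fun x hx => by have := hmem x hx; positivity))
    · fun_prop
  have hczpow : ContinuousOn (fun r : ℝ => Real.sinh r ^ ((m:ℤ)-1)) (Set.Icc α β) :=
    ContinuousOn.zpow₀ Real.continuous_sinh.continuousOn _ (fun x hx => Or.inl (hsne x hx))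
  -- integrability facts
  have int_g1 : IntervalIntegrable (fun r => (deriv a r)^2 * Real.sinh r^(m+1)) volume α β :=
    (by fun_prop : Continuous fun r => (deriv a r)^2 * Real.sinh r^(m+1)).intervalIntegrable α β
  have int_P : IntervalIntegrable (fun r => FA' m r * (a r)^2) volume α β := by
    apply ContinuousOn.intervalIntegrable; rw [huIcc]; exact hcFA'.mul (by fun_prop)
  have int_Q : IntervalIntegrable
      (fun r => (fA m r)^2 * Real.sinh r^(m+1) * (a r)^2) volume α β := by
    apply ContinuousOn.intervalIntegrable; rw [huIcc]
    exact ((hcfA.pow 2).mul (by fun_prop)).mul (by fun_prop)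
  have int_g2 : IntervalIntegrable (fun r => (a r)^2 * Real.sinh r^((m:ℤ)-1)) volume α β := by
    apply ContinuousOn.intervalIntegrable; rw [huIcc]
    exact (by fun_prop : ContinuousOn (fun r : ℝ => (a r)^2) _).mul hczpow
  have int_FAv : IntervalIntegrable (fun r => FA m r * (2 * a r * deriv a r)) volume α β := by
    apply ContinuousOn.intervalIntegrable; rw [huIcc]
    exact hcFA.mul (by fun_prop)
  have int_lhs : IntervalIntegrable
      (fun x => ((m:ℝ)+2)^2/4 * ((a x)^2 / x^2 * Real.sinh x^(m+1))) volume α β := by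
    apply ContinuousOn.intervalIntegrable; rw [huIcc]
    apply continuousOn_const.mul
    exact (((by fun_prop : ContinuousOn (fun x : ℝ => (a x)^2) _).div (by fun_prop)
      (fun x hx => by have := hmem x hx; positivity)).mul (by fun_prop))
  have int_rhs : IntervalIntegrable
      (fun x => (-(FA' m x) - (fA m x)^2 * Real.sinh x^(m+1)) * (a x)^2
        + ((m:ℝ)+1) * ((a x)^2 * Real.sinh x^((m:ℤ)-1))) volume α β := by
    apply ContinuousOn.intervalIntegrable; rw [huIcc]
    apply ContinuousOn.add
    · exact ((hcFA'.neg.sub ((hcfA.pow 2).mul (by fun_prop))).mul (by fun_prop))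
    · exact continuousOn_const.mul ((by fun_prop : ContinuousOn (fun x : ℝ => (a x)^2) _).mul hczpow)
  -- integration by parts
  have hvderiv : ∀ x ∈ Set.uIcc α β,
      HasDerivAt (fun r => (a r)^2) (2 * a x * deriv a x) x := by
    intro x _
    have h := (hda x).pow 2
    norm_num at h
    exact h
    try ring
  have hIBP := intervalIntegral.integral_mul_deriv_eq_deriv_mul
    (u := FA m) (v := fun r => (a r)^2) (u' := FA' m) (v' := fun r => 2 * a r * deriv a r)
    (fun x hx => hasDerivAt_FA m (hmem x (huIcc ▸ hx)))
    hvderiv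
    (by apply ContinuousOn.intervalIntegrable; rw [huIcc]; exact hcFA')
    ((by fun_prop : Continuous fun r => 2 * a r * deriv a r).intervalIntegrable α β)
  simp only [haα, haβ, ne_eq, OfNat.ofNat_ne_zero, not_false_eq_true, zero_pow, mul_zero,
    zero_sub, sub_zero, zero_mul] at hIBP
  -- hIBP : ∫ x in α..β, FA m x * (2 * a x * deriv a x) = -∫ x in α..β, FA' m x * (a x)^2
  -- nonnegativity of the square integral
  have hSq : 0 ≤ ∫ r in α..β, (deriv a r - fA m r * a r)^2 * Real.sinh r^(m+1) :=
    intervalIntegral.integral_nonneg hαβ.le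
      (fun x hx => mul_nonneg (sq_nonneg _)
        (pow_nonneg (Real.sinh_nonneg_iff.2 (hmem x hx).le) _))
  have hexpand : ∫ r in α..β, (deriv a r - fA m r * a r)^2 * Real.sinh r^(m+1)
      = ((∫ r in α..β, (deriv a r)^2 * Real.sinh r^(m+1))
        - ∫ r in α..β, FA m r * (2 * a r * deriv a r))
        + ∫ r in α..β, (fA m r)^2 * Real.sinh r^(m+1) * (a r)^2 := by
    rw [← intervalIntegral.integral_sub int_g1 int_FAv,
      ← intervalIntegral.integral_add (int_g1.sub int_FAv) int_Q]
    apply intervalIntegral.integral_congr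
    intro x hx
    rw [huIcc] at hx
    simp only [FA_eq m (hmem x hx)]
    ring
  -- pointwise inequality
  have hpt : ∀ x ∈ Set.Icc α β,
      ((m:ℝ)+2)^2/4 * ((a x)^2 / x^2 * Real.sinh x^(m+1))
        ≤ (-(FA' m x) - (fA m x)^2 * Real.sinh x^(m+1)) * (a x)^2
          + ((m:ℝ)+1) * ((a x)^2 * Real.sinh x^((m:ℤ)-1)) := by
    intro x hx
    have hk := keyIneq m (hmem x hx)
    have h1 : ((m:ℝ)+2)^2/4 * ((a x)^2 / x^2 * Real.sinh x^(m+1))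
        = (a x)^2 * (((m:ℝ)+2)^2/4 * (Real.sinh x^(m+1) / x^2)) := by ring
    have h2 : (-(FA' m x) - (fA m x)^2 * Real.sinh x^(m+1)) * (a x)^2
          + ((m:ℝ)+1) * ((a x)^2 * Real.sinh x^((m:ℤ)-1))
        = (a x)^2 * (-(FA' m x) - (fA m x)^2 * Real.sinh x^(m+1)
          + ((m:ℝ)+1) * Real.sinh x^((m:ℤ)-1)) := by ring
    rw [h1, h2]
    exact mul_le_mul_of_nonneg_left hk (sq_nonneg _)
  have hmono := intervalIntegral.integral_mono_on hαβ.le int_lhs int_rhs hpt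
  -- split the RHS integral
  have E1 : ∫ x in α..β, ((-(FA' m x) - (fA m x)^2 * Real.sinh x^(m+1)) * (a x)^2
        + ((m:ℝ)+1) * ((a x)^2 * Real.sinh x^((m:ℤ)-1)))
      = (-(∫ x in α..β, FA' m x * (a x)^2)
        - ∫ x in α..β, (fA m x)^2 * Real.sinh x^(m+1) * (a x)^2)
        + ((m:ℝ)+1) * ∫ x in α..β, (a x)^2 * Real.sinh x^((m:ℤ)-1) := by
    have h1 : (fun x => (-(FA' m x) - (fA m x)^2 * Real.sinh x^(m+1)) * (a x)^2
          + ((m:ℝ)+1) * ((a x)^2 * Real.sinh x^((m:ℤ)-1)))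
        = fun x => (((m:ℝ)+1) * ((a x)^2 * Real.sinh x^((m:ℤ)-1))
            - (fA m x)^2 * Real.sinh x^(m+1) * (a x)^2) - FA' m x * (a x)^2 := by
      funext x; ring
    rw [h1, intervalIntegral.integral_sub ((int_g2.const_mul _).sub int_Q) int_P,
      intervalIntegral.integral_sub (int_g2.const_mul _) int_Q,
      intervalIntegral.integral_const_mul]
    ring
  have E0 : ∫ x in α..β, ((m:ℝ)+2)^2/4 * ((a x)^2 / x^2 * Real.sinh x^(m+1))
      = ((m:ℝ)+2)^2/4 * ∫ x in α..β, (a x)^2 / x^2 * Real.sinh x^(m+1) :=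
    intervalIntegral.integral_const_mul _ _
  -- lambda bound
  have hI2 : 0 ≤ ∫ x in α..β, (a x)^2 * Real.sinh x^((m:ℤ)-1) :=
    intervalIntegral.integral_nonneg hαβ.le
      (fun x hx => mul_nonneg (sq_nonneg _) (zpow_pos (Real.sinh_pos_iff.2 (hmem x hx)) _).le)
  have hlam : ((m:ℝ)+1) ≤ ((n * (m + 2 + n - 2) : ℕ) : ℝ) := by
    have h1 : m + 1 ≤ n * (m + 2 + n - 2) := by
      have h2 : m + 2 + n - 2 = m + n := by omega
      rw [h2]
      calc m + 1 ≤ m + n := by omega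
        _ = 1 * (m + n) := (one_mul _).symm
        _ ≤ n * (m + n) := Nat.mul_le_mul_right _ hn
    calc ((m:ℝ)+1) = ((m + 1 : ℕ):ℝ) := by push_cast; ring
      _ ≤ _ := Nat.cast_le.2 h1
  have hlam2 : ((m:ℝ)+1) * (∫ x in α..β, (a x)^2 * Real.sinh x^((m:ℤ)-1))
      ≤ ((n * (m + 2 + n - 2) : ℕ) : ℝ) * ∫ x in α..β, (a x)^2 * Real.sinh x^((m:ℤ)-1) :=
    mul_le_mul_of_nonneg_right hlam hI2
  rw [E0] at hmono
  rw [E1] at hmono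
  rw [hexpand] at hSq
  rw [hIBP] at hSq
  linarith [hSq, hmono, hlam2]
end

section
/- Let N ≥ 2 be an integer, α ∈ ℝ, and let j ≥ 0 and n ≥ j+1 be integers. Then for every smooth function a : ℝ → ℝ with compact support contained in (0,∞): ∫_0^∞ r^{−α} a′(r)² (sinh r)^{N−1} dr + n(N+n−2) ∫_0^∞ r^{−α} a(r)² (sinh r)^{N−3} dr ≥ ((N−α−2)/2)² ∫_0^∞ r^{−α−2} a(r)² (sinh r)^{N−1} dr + (j+1)(N+j−1) ∫_0^∞ r^{−α} a(r)² (sinh r)^{N−3} dr + ∫_0^∞ r^{2−N} ((r^{(N−α−2)/2} a)′(r))² (sinh r)^{N−1} dr + ((N−1)(N−α−2)/2) ∫_0^∞ ((r coth r − 1)/r^{α+2}) a(r)² (sinh r)^{N−1} dr. -/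
open Real MeasureTheory

theorem stmt_7 (N : ℕ) (hN : 2 ≤ N) (α : ℝ)
    (j n : ℕ) (hn : j + 1 ≤ n)
    (a : ℝ → ℝ) (ha : ContDiff ℝ (⊤ : ℕ∞) a) (hac : HasCompactSupport a)
    (hsupp : tsupport a ⊆ Set.Ioi (0 : ℝ)) :
    (∫ r in Set.Ioi (0 : ℝ), r ^ (-α) * (deriv a r) ^ 2 * Real.sinh r ^ (N - 1))
      + ((n * (N + n - 2) : ℕ) : ℝ)
          * ∫ r in Set.Ioi (0 : ℝ), r ^ (-α) * (a r) ^ 2 * Real.sinh r ^ ((N : ℤ) - 3)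
    ≥ (((N : ℝ) - α - 2) / 2) ^ 2
          * (∫ r in Set.Ioi (0 : ℝ), r ^ (-α - 2) * (a r) ^ 2 * Real.sinh r ^ (N - 1))
        + (((j + 1) * (N + j - 1) : ℕ) : ℝ)
            * (∫ r in Set.Ioi (0 : ℝ), r ^ (-α) * (a r) ^ 2 * Real.sinh r ^ ((N : ℤ) - 3))
        + (∫ r in Set.Ioi (0 : ℝ), r ^ ((2 : ℝ) - (N : ℝ))
            * (deriv (fun s : ℝ => s ^ (((N : ℝ) - α - 2) / 2) * a s) r) ^ 2
            * Real.sinh r ^ (N - 1))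
        + ((N : ℝ) - 1) * ((N : ℝ) - α - 2) / 2
            * ∫ r in Set.Ioi (0 : ℝ),
                (r * (Real.cosh r / Real.sinh r) - 1) / r ^ (α + 2) * (a r) ^ 2
                  * Real.sinh r ^ (N - 1) := by
  set γ : ℝ := ((N : ℝ) - α - 2) / 2 with hγ
  set K := tsupport a ∪ Set.Icc 1 2 with hK
  have hKc : IsCompact K := hac.union isCompact_Icc
  have hKne : K.Nonempty := ⟨1, Or.inr ⟨le_refl 1, one_le_two⟩⟩
  have hKpos : K ⊆ Set.Ioi (0:ℝ) := by
    rintro x (hx | hx)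
    · exact hsupp hx
    · exact lt_of_lt_of_le one_pos hx.1
  set b : ℝ := sInf K / 2 with hbdef
  set c : ℝ := sSup K + 1 with hcdef
  have hIK : sInf K ∈ K := hKc.sInf_mem hKne
  have hSK : sSup K ∈ K := hKc.sSup_mem hKne
  have hI0 : (0:ℝ) < sInf K := hKpos hIK
  have hb : 0 < b := by rw [hbdef]; linarith
  have hbc : b < c := by
    have h := le_csSup hKc.bddAbove hIK
    rw [hbdef, hcdef]; linarith
  have hIcc : ∀ r ∈ Set.Icc b c, 0 < r := fun r hr => lt_of_lt_of_le hb hr.1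
  have hsub : tsupport a ⊆ Set.Ioo b c := by
    intro x hx
    have h1 : sInf K ≤ x := csInf_le hKc.bddBelow (Or.inl hx)
    have h2 : x ≤ sSup K := le_csSup hKc.bddAbove (Or.inl hx)
    exact ⟨by rw [hbdef]; linarith, by rw [hcdef]; linarith⟩
  -- vanishing outside (b, c)
  have hz : ∀ r, r ∉ Set.Ioo b c → a r = 0 :=
    fun r hr => image_eq_zero_of_notMem_tsupport (fun h => hr (hsub h))
  have hz' : ∀ r, r ∉ Set.Ioo b c → deriv a r = 0 := by
    intro r hr
    by_contra h
    exact hr (hsub (support_deriv_subset h))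
  have hzD : ∀ r, r ∉ Set.Ioo b c → deriv (fun s : ℝ => s ^ γ * a s) r = 0 := by
    intro r hr
    by_contra h
    have h2 : r ∈ tsupport (fun s : ℝ => s ^ γ * a s) := support_deriv_subset h
    have h3 : tsupport (fun s : ℝ => s ^ γ * a s) ⊆ tsupport a :=
      closure_mono (fun x hx h0 => hx (by simp [h0]))
    exact hr (hsub (h3 h2))
  -- conversion of Ioi-integrals to interval integrals
  have key : ∀ f : ℝ → ℝ, (∀ r, r ∉ Set.Ioo b c → f r = 0) →
      (∫ r in Set.Ioi (0:ℝ), f r) = ∫ r in b..c, f r := by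
    intro f hf
    rw [intervalIntegral.integral_of_le hbc.le]
    rw [setIntegral_eq_integral_of_forall_compl_eq_zero (s := Set.Ioi (0:ℝ))
        (fun x hx => hf x (fun h => absurd (lt_trans hb h.1) hx))]
    rw [setIntegral_eq_integral_of_forall_compl_eq_zero (s := Set.Ioc b c)
        (fun x hx => hf x (fun h => hx ⟨h.1, h.2.le⟩))]
  -- derivatives
  have hda : ∀ r : ℝ, HasDerivAt a (deriv a r) r := fun r =>
    (ha.differentiable (by simp) r).hasDerivAt
  have hDf : ∀ r : ℝ, 0 < r → deriv (fun s : ℝ => s ^ γ * a s) r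
      = γ * r ^ (γ-1) * a r + r ^ γ * deriv a r := fun r hr =>
    ((Real.hasDerivAt_rpow_const (Or.inl hr.ne')).mul (hda r)).deriv
  -- continuity
  have hca : Continuous a := ha.continuous
  have hca' : Continuous (deriv a) := ha.continuous_deriv (by simp)
  have crpow : ∀ p : ℝ, ContinuousOn (fun r : ℝ => r ^ p) (Set.Icc b c) :=
    fun p => ContinuousOn.rpow_const continuousOn_id (fun r hr => Or.inl (hIcc r hr).ne')
  have csh : ∀ m : ℕ, ContinuousOn (fun r : ℝ => Real.sinh r ^ m) (Set.Icc b c) :=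
    fun m => (Real.continuous_sinh.pow m).continuousOn
  have cD : ContinuousOn (fun r => deriv (fun s : ℝ => s ^ γ * a s) r) (Set.Icc b c) := by
    apply ContinuousOn.congr
      (f := fun r : ℝ => γ * r ^ (γ-1) * a r + r ^ γ * deriv a r)
    · exact ((continuousOn_const.mul (crpow (γ-1))).mul hca.continuousOn).add
        ((crpow γ).mul hca'.continuousOn)
    · exact fun r hr => hDf r (hIcc r hr)
  have int1 : IntervalIntegrable
      (fun r : ℝ => r ^ (-α-2) * a r ^ 2 * Real.sinh r ^ (N-1)) volume b c := by
    apply ContinuousOn.intervalIntegrable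
    rw [Set.uIcc_of_le hbc.le]
    exact ((crpow _).mul (hca.pow 2).continuousOn).mul (csh _)
  have int2 : IntervalIntegrable
      (fun r : ℝ => r ^ ((2:ℝ)-(N:ℝ)) * (deriv (fun s : ℝ => s ^ γ * a s) r) ^ 2
        * Real.sinh r ^ (N-1)) volume b c := by
    apply ContinuousOn.intervalIntegrable
    rw [Set.uIcc_of_le hbc.le]
    exact ((crpow _).mul (cD.pow 2)).mul (csh _)
  have int3 : IntervalIntegrable
      (fun r : ℝ => (r * (Real.cosh r / Real.sinh r) - 1) / r ^ (α+2) * a r ^ 2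
        * Real.sinh r ^ (N-1)) volume b c := by
    apply ContinuousOn.intervalIntegrable
    rw [Set.uIcc_of_le hbc.le]
    refine ((ContinuousOn.div ?_ (crpow (α+2))
      (fun r hr => (rpow_pos_of_pos (hIcc r hr) _).ne')).mul
        (hca.pow 2).continuousOn).mul (csh _)
    exact (continuousOn_id.mul (Real.continuous_cosh.continuousOn.div
      Real.continuous_sinh.continuousOn
      (fun r hr => (Real.sinh_pos_iff.mpr (hIcc r hr)).ne'))).sub continuousOn_const
  have int4 : IntervalIntegrable
      (fun r : ℝ => r ^ (-α) * (deriv a r) ^ 2 * Real.sinh r ^ (N-1)) volume b c := by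
    apply ContinuousOn.intervalIntegrable
    rw [Set.uIcc_of_le hbc.le]
    exact ((crpow _).mul (hca'.pow 2).continuousOn).mul (csh _)
  -- the exact-derivative function
  set g : ℝ → ℝ := fun s => γ * (s ^ (-α-1) * (Real.sinh s ^ (N-1) * (a s)^2)) with hgdef
  set g' : ℝ → ℝ := fun r => γ * ((-α-1) * r^(-α-2) * (Real.sinh r ^ (N-1) * (a r)^2)
      + (r * r^(-α-2)) * (((N:ℝ)-1) * Real.sinh r ^ (N-2) * Real.cosh r * (a r)^2
          + Real.sinh r ^ (N-1) * (2 * a r * deriv a r))) with hg'def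
  have hgderiv : ∀ r ∈ Set.uIcc b c, HasDerivAt g (g' r) r := by
    intro r hr
    rw [Set.uIcc_of_le hbc.le] at hr
    have hrpos := hIcc r hr
    have H := ((Real.hasDerivAt_rpow_const (p := -α-1) (Or.inl hrpos.ne')).mul
      (((Real.hasDerivAt_sinh r).pow (N-1)).mul ((hda r).pow 2))).const_mul γ
    rw [hgdef, hg'def]
    refine H.congr_deriv ?_
    have e0 : r ^ (-α-1-1) = r ^ (-α-2:ℝ) := by rw [show (-α-1-1:ℝ) = -α-2 by ring]
    have e1 : r ^ (-α-1) = r * r ^ (-α-2:ℝ) := by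
      rw [show (-α-1:ℝ) = 1 + (-α-2) by ring, rpow_add hrpos, rpow_one]
    have hc : ((N-1:ℕ):ℝ) = (N:ℝ)-1 := by
      rw [Nat.cast_sub (by omega)]; norm_num
    have h11 : N - 1 - 1 = N - 2 := by omega
    rw [e0, e1, hc, h11]
    simp only [Pi.mul_apply, Pi.pow_apply]
    ring
  have intg' : IntervalIntegrable g' volume b c := by
    apply ContinuousOn.intervalIntegrable
    rw [Set.uIcc_of_le hbc.le, hg'def]
    refine continuousOn_const.mul (ContinuousOn.add ?_ ?_)
    · exact (continuousOn_const.mul (crpow _)).mul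
        ((csh _).mul (hca.pow 2).continuousOn)
    · refine (continuousOn_id.mul (crpow _)).mul (ContinuousOn.add ?_ ?_)
      · exact ((continuousOn_const.mul (csh _)).mul
          Real.continuous_cosh.continuousOn).mul (hca.pow 2).continuousOn
      · exact (csh _).mul ((continuousOn_const.mul hca.continuousOn).mul
          hca'.continuousOn)
  have hzero : ∫ r in b..c, g' r = 0 := by
    rw [intervalIntegral.integral_eq_sub_of_hasDerivAt hgderiv intg', hgdef]
    have h1 : a b = 0 := hz b (fun h => lt_irrefl _ h.1)
    have h2 : a c = 0 := hz c (fun h => lt_irrefl _ h.2)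
    simp [h1, h2]
  -- pointwise identity
  have hpt : ∀ r ∈ Set.uIcc b c,
      γ^2 * (r ^ (-α-2) * a r ^ 2 * Real.sinh r ^ (N-1))
        + r ^ ((2:ℝ)-(N:ℝ)) * (deriv (fun s : ℝ => s ^ γ * a s) r) ^ 2
            * Real.sinh r ^ (N-1)
        + ((N:ℝ)-1) * γ * ((r * (Real.cosh r / Real.sinh r) - 1) / r ^ (α+2)
            * a r ^ 2 * Real.sinh r ^ (N-1))
        - r ^ (-α) * (deriv a r) ^ 2 * Real.sinh r ^ (N-1) = g' r := by
    intro r hr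
    rw [Set.uIcc_of_le hbc.le] at hr
    have hrpos := hIcc r hr
    have hsh : Real.sinh r ≠ 0 := (Real.sinh_pos_iff.mpr hrpos).ne'
    rw [hDf r hrpos]
    simp only [hg'def]
    have hQ : (0:ℝ) < r ^ (γ-1) := rpow_pos_of_pos hrpos _
    have h1 : ∀ x : ℝ, r ^ (x+1) = r^x * r := fun x => by rw [rpow_add hrpos, rpow_one]
    have e2 : r ^ (-α:ℝ) = r ^ (-α-2:ℝ) * r * r := by
      conv_lhs => rw [show (-α:ℝ) = -α-2+1+1 by ring]
      rw [h1, h1]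
    have e3 : r ^ γ = r ^ (γ-1) * r := by
      conv_lhs => rw [show γ = γ-1+1 by ring]
      rw [h1]
    have e4 : r ^ ((2:ℝ)-(N:ℝ)) * (r^(γ-1)*r^(γ-1)) = r^(-α-2:ℝ) := by
      rw [← rpow_add hrpos, ← rpow_add hrpos]
      congr 1
      rw [hγ]; ring
    have eW : r ^ ((2:ℝ)-(N:ℝ)) = r^(-α-2:ℝ) * (r^(γ-1)*r^(γ-1))⁻¹ :=
      (eq_mul_inv_iff_mul_eq₀ (mul_pos hQ hQ).ne').mpr e4
    have eV : r ^ (α+2:ℝ) = (r^(-α-2:ℝ))⁻¹ := by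
      rw [show (α+2:ℝ) = -(-α-2) by ring, Real.rpow_neg hrpos.le]
    have hpow : Real.sinh r ^ (N-1) = Real.sinh r ^ (N-2) * Real.sinh r := by
      rw [← pow_succ]; congr 1; omega
    rw [e2, e3, eW, eV, hpow]
    have hγ2 : γ * 2 = (N:ℝ) - α - 2 := by rw [hγ]; ring
    field_simp
    linear_combination (γ * (a r)^2 * Real.sinh r ^(N-2) * Real.sinh r * Real.sinh r
      * r^(-α-2:ℝ) * (r^(γ-1)*r^(γ-1))) * hγ2
  -- split the combined integral
  have hsplit : ∫ r in b..c,
      (γ^2 * (r ^ (-α-2) * a r ^ 2 * Real.sinh r ^ (N-1))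
        + r ^ ((2:ℝ)-(N:ℝ)) * (deriv (fun s : ℝ => s ^ γ * a s) r) ^ 2
            * Real.sinh r ^ (N-1)
        + ((N:ℝ)-1) * γ * ((r * (Real.cosh r / Real.sinh r) - 1) / r ^ (α+2)
            * a r ^ 2 * Real.sinh r ^ (N-1))
        - r ^ (-α) * (deriv a r) ^ 2 * Real.sinh r ^ (N-1))
      = γ^2 * (∫ r in b..c, r ^ (-α-2) * a r ^ 2 * Real.sinh r ^ (N-1))
        + (∫ r in b..c, r ^ ((2:ℝ)-(N:ℝ)) * (deriv (fun s : ℝ => s ^ γ * a s) r) ^ 2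
            * Real.sinh r ^ (N-1))
        + ((N:ℝ)-1) * γ * (∫ r in b..c, (r * (Real.cosh r / Real.sinh r) - 1) / r ^ (α+2)
            * a r ^ 2 * Real.sinh r ^ (N-1))
        - ∫ r in b..c, r ^ (-α) * (deriv a r) ^ 2 * Real.sinh r ^ (N-1) := by
    rw [intervalIntegral.integral_sub (((int1.const_mul _).add int2).add (int3.const_mul _)) int4,
      intervalIntegral.integral_add ((int1.const_mul _).add int2) (int3.const_mul _),
      intervalIntegral.integral_add (int1.const_mul _) int2,
      intervalIntegral.integral_const_mul, intervalIntegral.integral_const_mul]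
  have hmain : γ^2 * (∫ r in b..c, r ^ (-α-2) * a r ^ 2 * Real.sinh r ^ (N-1))
        + (∫ r in b..c, r ^ ((2:ℝ)-(N:ℝ)) * (deriv (fun s : ℝ => s ^ γ * a s) r) ^ 2
            * Real.sinh r ^ (N-1))
        + ((N:ℝ)-1) * γ * (∫ r in b..c, (r * (Real.cosh r / Real.sinh r) - 1) / r ^ (α+2)
            * a r ^ 2 * Real.sinh r ^ (N-1))
        - (∫ r in b..c, r ^ (-α) * (deriv a r) ^ 2 * Real.sinh r ^ (N-1)) = 0 := by
    rw [← hsplit, intervalIntegral.integral_congr hpt]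
    exact hzero
  -- conversions
  have E1 : (∫ r in Set.Ioi (0:ℝ), r ^ (-α-2) * a r ^ 2 * Real.sinh r ^ (N-1))
      = ∫ r in b..c, r ^ (-α-2) * a r ^ 2 * Real.sinh r ^ (N-1) :=
    key _ (fun r hr => by rw [hz r hr]; ring)
  have E2 : (∫ r in Set.Ioi (0:ℝ), r ^ ((2:ℝ)-(N:ℝ))
        * (deriv (fun s : ℝ => s ^ γ * a s) r) ^ 2 * Real.sinh r ^ (N-1))
      = ∫ r in b..c, r ^ ((2:ℝ)-(N:ℝ))
        * (deriv (fun s : ℝ => s ^ γ * a s) r) ^ 2 * Real.sinh r ^ (N-1) :=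
    key _ (fun r hr => by rw [hzD r hr]; ring)
  have E3 : (∫ r in Set.Ioi (0:ℝ), (r * (Real.cosh r / Real.sinh r) - 1) / r ^ (α+2)
        * a r ^ 2 * Real.sinh r ^ (N-1))
      = ∫ r in b..c, (r * (Real.cosh r / Real.sinh r) - 1) / r ^ (α+2)
        * a r ^ 2 * Real.sinh r ^ (N-1) :=
    key _ (fun r hr => by rw [hz r hr]; ring)
  have E4 : (∫ r in Set.Ioi (0:ℝ), r ^ (-α) * (deriv a r) ^ 2 * Real.sinh r ^ (N-1))
      = ∫ r in b..c, r ^ (-α) * (deriv a r) ^ 2 * Real.sinh r ^ (N-1) :=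
    key _ (fun r hr => by rw [hz' r hr]; ring)
  -- nonnegativity of the angular integral
  have hJ : 0 ≤ ∫ r in Set.Ioi (0:ℝ), r ^ (-α) * a r ^ 2 * Real.sinh r ^ ((N:ℤ)-3) := by
    apply setIntegral_nonneg measurableSet_Ioi
    intro r hr
    have hs : (0:ℝ) ≤ Real.sinh r := (Real.sinh_pos_iff.mpr hr).le
    exact mul_nonneg (mul_nonneg (Real.rpow_nonneg (le_of_lt hr) _) (sq_nonneg _))
      (zpow_nonneg hs _)
  have hCC : (((j + 1) * (N + j - 1) : ℕ) : ℝ) ≤ ((n * (N + n - 2) : ℕ) : ℝ) :=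
    Nat.cast_le.mpr (Nat.mul_le_mul hn (by omega))
  have hco : ((N:ℝ) - 1) * ((N:ℝ) - α - 2) / 2 = ((N:ℝ)-1) * γ := by rw [hγ]; ring
  rw [ge_iff_le, E1, E2, E3, E4, hco]
  have hmono : (((j + 1) * (N + j - 1) : ℕ) : ℝ)
        * (∫ r in Set.Ioi (0:ℝ), r ^ (-α) * a r ^ 2 * Real.sinh r ^ ((N:ℤ)-3))
      ≤ ((n * (N + n - 2) : ℕ) : ℝ)
        * (∫ r in Set.Ioi (0:ℝ), r ^ (-α) * a r ^ 2 * Real.sinh r ^ ((N:ℤ)-3)) :=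
    mul_le_mul_of_nonneg_right hCC hJ
  linarith [hmain, hmono]
end

section
/- Let N ≥ 2 be an integer and α, β ∈ ℝ. For every smooth function u : ℝ^N → ℝ with compact support not containing the origin, writing ∂_r u(x) = ⟨x, ∇u(x)⟩/‖x‖ for the radial derivative, one has ( ∫_{ℝ^N} ‖x‖^{−α} (∂_r u(x))² dx ) · ( ∫_{ℝ^N} ‖x‖^{α−2β+2} u(x)² dx ) ≥ ((N−β)²/4) ( ∫_{ℝ^N} ‖x‖^{−β} u(x)² dx )². -/
open Real MeasureTheory Set Filter Function Topology
open scoped RealInnerProductSpace Manifold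

lemma aux_hasFDerivAt_norm_rpow {E : Type*} [NormedAddCommGroup E] [InnerProductSpace ℝ E]
    {x : E} (hx : x ≠ 0) (p : ℝ) :
    HasFDerivAt (fun y : E ↦ ‖y‖ ^ p) ((p * ‖x‖ ^ (p - 2)) • innerSL ℝ x) x := by
  have h0 : ‖x‖ ≠ 0 := norm_ne_zero_iff.mpr hx
  have h0' : (0:ℝ) < ‖x‖ := norm_pos_iff.mpr hx
  have h1 : HasStrictFDerivAt (fun y : E => (‖y‖ ^ 2 : ℝ) ^ (p/2))
      ((p/2 * (‖x‖^2 : ℝ) ^ (p/2 - 1)) • (2 • innerSL ℝ x)) x :=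
    (hasStrictFDerivAt_norm_sq x).rpow_const (Or.inl (by positivity))
  have heq : (fun y : E => (‖y‖ ^ 2 : ℝ) ^ (p/2)) = fun y : E => ‖y‖ ^ p := by
    funext y
    rw [← Real.rpow_natCast ‖y‖ 2, ← Real.rpow_mul (norm_nonneg y)]
    congr 1
    push_cast
    ring
  have harr : ((p/2 * (‖x‖^2 : ℝ) ^ (p/2 - 1)) • (2 • innerSL ℝ x))
      = ((p * ‖x‖ ^ (p - 2)) • innerSL ℝ x) := by
    rw [← Nat.cast_smul_eq_nsmul ℝ 2, smul_smul]
    congr 1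
    rw [← Real.rpow_natCast ‖x‖ 2, ← Real.rpow_mul (norm_nonneg x)]
    rw [show ((2:ℕ):ℝ) * (p/2 - 1) = p - 2 by push_cast; ring]
    push_cast
    ring
  rw [← heq, ← harr]
  exact h1.hasFDerivAt

lemma aux_cauchy_schwarz {X : Type*} [MeasurableSpace X] (μ : Measure X) (f g : X → ℝ)
    (hf : Integrable (fun x => f x * f x) μ) (hg : Integrable (fun x => g x * g x) μ)
    (hfg : Integrable (fun x => f x * g x) μ) :
    (∫ x, f x * g x ∂μ)^2 ≤ (∫ x, f x * f x ∂μ) * (∫ x, g x * g x ∂μ) := by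
  have key : ∀ t : ℝ, 0 ≤ (∫ x, f x * f x ∂μ) * (t*t) + (2 * ∫ x, f x * g x ∂μ) * t
      + (∫ x, g x * g x ∂μ) := by
    intro t
    have h2 : 0 ≤ ∫ x, (t*t) * (f x * f x) + ((2*t) * (f x * g x) + g x * g x) ∂μ := by
      apply integral_nonneg
      intro x
      simp only [Pi.zero_apply]
      nlinarith [sq_nonneg (t * f x + g x)]
    have e1 : ∫ x, (t*t) * (f x * f x) + ((2*t) * (f x * g x) + g x * g x) ∂μ
        = (t*t) * ∫ x, f x * f x ∂μ + ((2*t) * ∫ x, f x * g x ∂μ + ∫ x, g x * g x ∂μ) := by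
      have i1 : Integrable (fun x => (2*t) * (f x * g x) + g x * g x) μ :=
        (hfg.const_mul _).add hg
      have i2 : Integrable (fun x => (2*t) * (f x * g x)) μ := hfg.const_mul _
      rw [integral_add (hf.const_mul (t*t)) i1, integral_add i2 hg,
        integral_const_mul, integral_const_mul]
    rw [e1] at h2
    nlinarith [h2]
  have := discrim_le_zero key
  rw [discrim] at this
  nlinarith [this]

set_option maxHeartbeats 2000000 in
theorem stmt_10 (N : ℕ) (hN : 2 ≤ N) (α β : ℝ)
    (u : EuclideanSpace ℝ (Fin N) → ℝ) (hu : ContDiff ℝ (⊤ : ℕ∞) u)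
    (hc : HasCompactSupport u)
    (h0 : (0 : EuclideanSpace ℝ (Fin N)) ∉ tsupport u) :
    (∫ x : EuclideanSpace ℝ (Fin N), ‖x‖ ^ (-α) * (⟪x, gradient u x⟫ / ‖x‖) ^ 2)
      * (∫ x : EuclideanSpace ℝ (Fin N), ‖x‖ ^ (α - 2 * β + 2) * (u x) ^ 2)
    ≥ ((N : ℝ) - β) ^ 2 / 4
        * (∫ x : EuclideanSpace ℝ (Fin N), ‖x‖ ^ (-β) * (u x) ^ 2) ^ 2 := by
  classical
  let E := EuclideanSpace ℝ (Fin N)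
  set K := tsupport u with hK
  have hKc : IsCompact K := hc
  have hKcl : IsClosed K := isClosed_closure
  -- cutoff function
  obtain ⟨χ₀, hχ0, hχ1, hχ01⟩ :=
    exists_contMDiffMap_zero_one_nhds_of_isClosed 𝓘(ℝ, E) (n := (⊤:ℕ∞)) (isClosed_singleton (x := (0:E)))
      hKcl (Set.disjoint_singleton_left.mpr h0)
  set χ : E → ℝ := ⇑χ₀ with hχdef
  have hχ : ContDiff ℝ ((⊤:ℕ∞) : WithTop ℕ∞) χ := by
    have := χ₀.contMDiff
    rwa [contMDiff_iff_contDiff] at this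
  obtain ⟨U0, hU0o, hU0s, hU0z⟩ : ∃ t, IsOpen t ∧ ({(0:E)} : Set E) ⊆ t ∧ ∀ x ∈ t, χ x = 0 :=
    eventually_nhdsSet_iff_exists.mp hχ0
  obtain ⟨U1, hU1o, hU1s, hU1one⟩ : ∃ t, IsOpen t ∧ K ⊆ t ∧ ∀ x ∈ t, χ x = 1 :=
    eventually_nhdsSet_iff_exists.mp hχ1
  have hU00 : (0:E) ∈ U0 := hU0s rfl
  have hU1ne : ∀ x ∈ U1, x ≠ 0 := by
    intro x hx h
    have h1 : χ x = 1 := hU1one x hx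
    have h2 : χ x = 0 := by rw [h]; exact hU0z 0 hU00
    rw [h1] at h2; norm_num at h2
  -- basic functions
  set D : E → ℝ := fun x => fderiv ℝ u x x with hD
  set g : E → ℝ := fun x => u x * u x with hg
  have hud : Differentiable ℝ u := hu.differentiable (by simp)
  have hgd : ContDiff ℝ (⊤ : ℕ∞) g := hu.mul hu
  have hgdiff : Differentiable ℝ g := hgd.differentiable (by simp)
  have hucont : Continuous u := hu.continuous
  have hgc : Continuous g := hucont.mul hucont
  have hu0 : ∀ x ∉ K, u x = 0 := fun x hx => image_eq_zero_of_notMem_tsupport hx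
  have hg0 : ∀ x ∉ K, g x = 0 := fun x hx => by simp [hg, hu0 x hx]
  have hfu0 : ∀ x ∉ K, fderiv ℝ u x = 0 := by
    intro x hx
    by_contra h
    exact hx (support_fderiv_subset ℝ (mem_support.mpr h))
  have hD0 : ∀ x ∉ K, D x = 0 := fun x hx => by simp [hD, hfu0 x hx]
  have htsg : tsupport g ⊆ K := by
    apply closure_minimal _ hKcl
    intro x hx
    by_contra hxK
    exact hx (by simp [hg, hu0 x hxK])
  have hgfd0 : ∀ x ∉ K, fderiv ℝ g x = 0 := by
    intro x hx
    by_contra h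
    exact hx (htsg (support_fderiv_subset ℝ (mem_support.mpr h)))
  have hDcont : Continuous D := (hu.continuous_fderiv (by simp)).clm_apply continuous_id
  have hgfcont : ∀ v : E, Continuous (fun x => fderiv ℝ g x v) :=
    fun v => (hgd.continuous_fderiv (by simp)).clm_apply continuous_const
  -- integrability helpers
  have hKint : ∀ m : E → ℝ, Continuous m → (∀ x ∉ K, m x = 0) → Integrable m := by
    intro m hm hm0
    exact hm.integrable_of_hasCompactSupport (HasCompactSupport.intro hKc hm0)
  have hcontw : ∀ (e : ℝ) (m : E → ℝ), Continuous m → (∀ x ∉ K, m x = 0) →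
      Continuous (fun x => ‖x‖ ^ e * m x) := by
    intro e m hm hm0
    rw [continuous_iff_continuousAt]
    intro x
    by_cases hx : x = 0
    · subst hx
      have hX : Kᶜ ∈ 𝓝 (0:E) := hKcl.isOpen_compl.mem_nhds h0
      have hev : (fun y : E => ‖y‖ ^ e * m y) =ᶠ[𝓝 (0:E)] (fun _ => (0:ℝ)) :=
        eventuallyEq_of_mem hX (fun y hy => by simp [hm0 y hy])
      exact continuousAt_const.congr hev.symm
    · exact (((Real.continuousAt_rpow_const _ _
        (Or.inl (norm_ne_zero_iff.mpr hx))).comp continuous_norm.continuousAt).mul hm.continuousAt)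
  have hintw : ∀ (e : ℝ) (m : E → ℝ), Continuous m → (∀ x ∉ K, m x = 0) →
      Integrable (fun x => ‖x‖ ^ e * m x) := by
    intro e m hm hm0
    exact hKint _ (hcontw e m hm hm0) (fun x hx => by simp [hm0 x hx])
  -- the vector field components
  set F : Fin N → E → ℝ := fun i x => (χ x * ‖x‖ ^ (-β)) * x i with hF
  set e : Fin N → E := fun i => EuclideanSpace.single i (1:ℝ) with he
  have hFdiff : ∀ i, Differentiable ℝ (F i) := by
    intro i x
    by_cases hx : x = 0
    · subst hx
      have hev : F i =ᶠ[𝓝 (0:E)] (fun _ => (0:ℝ)) :=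
        eventuallyEq_of_mem (hU0o.mem_nhds hU00) (fun y hy => by simp [hF, hU0z y hy])
      exact (differentiableAt_const (0:ℝ)).congr_of_eventuallyEq hev
    · have h1 : DifferentiableAt ℝ χ x := (hχ.differentiable (by simp)) x
      have h2 : DifferentiableAt ℝ (fun y : E => ‖y‖ ^ (-β)) x :=
        (aux_hasFDerivAt_norm_rpow hx (-β)).differentiableAt
      have h3 : DifferentiableAt ℝ (fun y : E => y i) x :=
        (EuclideanSpace.proj (𝕜 := ℝ) i).differentiableAt
      exact (h1.mul h2).mul h3
  have hFcont : ∀ i, Continuous (F i) := fun i => (hFdiff i).continuous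
  -- derivative of F i in direction e i on U1
  have hfderivF : ∀ i, ∀ x ∈ U1, fderiv ℝ (F i) x (e i)
      = ‖x‖ ^ (-β) + (-β * ‖x‖ ^ (-β-2)) * (x i * x i) := by
    intro i x hx
    have hxne : x ≠ 0 := hU1ne x hx
    have hev : F i =ᶠ[𝓝 x] (fun y => ‖y‖ ^ (-β) * y i) :=
      eventuallyEq_of_mem (hU1o.mem_nhds hx) (fun y hy => by simp [hF, hU1one y hy])
    have hDer : HasFDerivAt (fun y : E => ‖y‖ ^ (-β) * y i)
        ((‖x‖ ^ (-β)) • (EuclideanSpace.proj (𝕜 := ℝ) i)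
          + (x i) • ((-β * ‖x‖ ^ (-β-2)) • innerSL ℝ x)) x := by
      exact (aux_hasFDerivAt_norm_rpow hxne (-β)).mul
        ((EuclideanSpace.proj (𝕜 := ℝ) i).hasFDerivAt)
    rw [hev.fderiv_eq, hDer.fderiv]
    have hi : (inner ℝ x (EuclideanSpace.single i (1:ℝ)) : ℝ) = x i := by
      simp [EuclideanSpace.inner_single_right]
    have hp : (EuclideanSpace.proj (𝕜 := ℝ) i) (EuclideanSpace.single i (1:ℝ)) = 1 := by
      simp [EuclideanSpace.single_apply]
    simp only [he, ContinuousLinearMap.add_apply, ContinuousLinearMap.coe_smul',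
      Pi.smul_apply, ContinuousLinearMap.smul_apply, smul_eq_mul, innerSL_apply_apply, hi, hp]
    ring
  -- integrability of the three products, for each i
  have hI1 : ∀ i, Integrable (fun x => F i x * fderiv ℝ g x (e i)) := by
    intro i
    exact hKint _ ((hFcont i).mul (hgfcont (e i)))
      (fun x hx => by simp [hgfd0 x hx])
  have hI3 : ∀ i, Integrable (fun x => F i x * g x) := by
    intro i
    exact hKint _ ((hFcont i).mul hgc) (fun x hx => by simp [hg0 x hx])
  have hexp : ∀ i, (fun x => fderiv ℝ (F i) x (e i) * g x)
      = fun x => (‖x‖ ^ (-β) + (-β * ‖x‖ ^ (-β-2)) * (x i * x i)) * g x := by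
    intro i
    funext x
    by_cases hx : x ∈ U1
    · rw [hfderivF i x hx]
    · have hxK : x ∉ K := fun h => hx (hU1s h)
      simp [hg0 x hxK]
  have hI2' : ∀ i, Integrable
      (fun x => (‖x‖ ^ (-β) + (-β * ‖x‖ ^ (-β-2)) * (x i * x i)) * g x) := by
    intro i
    have hre : (fun x : E => (‖x‖ ^ (-β) + (-β * ‖x‖ ^ (-β-2)) * (x i * x i)) * g x)
        = fun x => ‖x‖ ^ (-β) * g x + (-β) * (‖x‖ ^ (-β-2) * ((x i * x i) * g x)) := by
      funext x; ring
    rw [hre]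
    have hcxi : Continuous (fun x : E => x i * x i * g x) :=
      (((EuclideanSpace.proj (𝕜 := ℝ) i).continuous).mul
        ((EuclideanSpace.proj (𝕜 := ℝ) i).continuous)).mul hgc
    exact (hintw _ _ hgc hg0).add
      ((hintw _ _ hcxi (fun x hx => by simp [hg0 x hx])).const_mul _)
  have hI2 : ∀ i, Integrable (fun x => fderiv ℝ (F i) x (e i) * g x) := by
    intro i; rw [hexp i]; exact hI2' i
  -- integration by parts in each direction
  have hpart : ∀ i, ∫ x, F i x * fderiv ℝ g x (e i) = - ∫ x, fderiv ℝ (F i) x (e i) * g x :=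
    fun i => integral_mul_fderiv_eq_neg_fderiv_mul_of_integrable (hI2 i) (hI1 i) (hI3 i)
      (fun x _ => hFdiff i x) (fun x _ => hgdiff x)
  -- sum over i : LHS
  have hxsum : ∀ x : E, ∑ i, (x i) • (e i) = x := by
    intro x
    have := (EuclideanSpace.basisFun (Fin N) ℝ).sum_repr x
    simpa [he, EuclideanSpace.basisFun_apply, EuclideanSpace.basisFun_repr] using this
  have hlin : ∀ (L : EuclideanSpace ℝ (Fin N) →L[ℝ] ℝ) (x : EuclideanSpace ℝ (Fin N)),
      L x = ∑ i, x i * L (e i) := by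
    intro L x
    conv_lhs => rw [← hxsum x]
    rw [map_sum]
    exact Finset.sum_congr rfl (fun i _ => by rw [_root_.map_smul]; rfl)
  have hL : ∑ i, ∫ x, F i x * fderiv ℝ g x (e i)
      = ∫ x, (χ x * ‖x‖ ^ (-β)) * fderiv ℝ g x x := by
    rw [← integral_finset_sum _ (fun i _ => hI1 i)]
    congr 1
    funext x
    rw [hlin (fderiv ℝ g x) x, Finset.mul_sum]
    exact Finset.sum_congr rfl (fun i _ => by simp [hF]; ring)
  -- sum over i : RHS
  have hx2 : ∀ x : E, ∑ i, x i * x i = ‖x‖ ^ (2:ℕ) := by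
    intro x
    have h := _root_.real_inner_self_eq_norm_sq x
    rw [← h, PiLp.inner_apply]
    simp [RCLike.inner_apply, conj_trivial, sq]
  have hR : ∑ i, ∫ x, fderiv ℝ (F i) x (e i) * g x
      = ((N:ℝ) - β) * ∫ x, ‖x‖ ^ (-β) * g x := by
    calc ∑ i, ∫ x, fderiv ℝ (F i) x (e i) * g x
        = ∑ i, ∫ x, (‖x‖ ^ (-β) + (-β * ‖x‖ ^ (-β-2)) * (x i * x i)) * g x := by
          exact Finset.sum_congr rfl (fun i _ => by rw [hexp i])
      _ = ∫ x, ∑ i, (‖x‖ ^ (-β) + (-β * ‖x‖ ^ (-β-2)) * (x i * x i)) * g x :=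
          (integral_finset_sum _ (fun i _ => hI2' i)).symm
      _ = ∫ x, ((N:ℝ) - β) * (‖x‖ ^ (-β) * g x) := by
          congr 1
          funext x
          by_cases hxK : x ∈ K
          · have hxne : x ≠ 0 := hU1ne x (hU1s hxK)
            have hnp : (0:ℝ) < ‖x‖ := norm_pos_iff.mpr hxne
            have hpow : ‖x‖ ^ (-β-2) * ‖x‖ ^ (2:ℕ) = ‖x‖ ^ (-β) := by
              rw [← Real.rpow_natCast ‖x‖ 2, ← Real.rpow_add hnp]
              norm_num
            rw [← Finset.sum_mul]
            rw [Finset.sum_add_distrib, Finset.sum_const, ← Finset.mul_sum, hx2 x]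
            simp only [Finset.card_univ, Fintype.card_fin, nsmul_eq_mul]
            have : -β * (‖x‖ ^ (-β-2) * ‖x‖ ^ (2:ℕ)) = -β * ‖x‖ ^ (-β) := by rw [hpow]
            linear_combination g x * this
          · simp [hg0 x hxK]
      _ = ((N:ℝ) - β) * ∫ x, ‖x‖ ^ (-β) * g x := integral_const_mul _ _
  -- the divergence identity
  have hdiv : ∫ x, (χ x * ‖x‖ ^ (-β)) * fderiv ℝ g x x
      = -(((N:ℝ) - β) * ∫ x, ‖x‖ ^ (-β) * g x) := by
    rw [← hL, ← hR]
    rw [Finset.sum_congr rfl (fun i _ => hpart i), ← Finset.sum_neg_distrib]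
  
  -- simplify the integrand on the left of hdiv
  have hgx : ∀ x : EuclideanSpace ℝ (Fin N), fderiv ℝ g x x = 2 * (u x * D x) := by
    intro x
    have hmul : fderiv ℝ g x = u x • fderiv ℝ u x + u x • fderiv ℝ u x :=
      fderiv_mul (hud x) (hud x)
    rw [hmul]
    simp only [hD, ContinuousLinearMap.add_apply, ContinuousLinearMap.coe_smul',
      Pi.smul_apply, smul_eq_mul]
    ring
  have hLHSeq : (fun x : EuclideanSpace ℝ (Fin N) => (χ x * ‖x‖ ^ (-β)) * fderiv ℝ g x x)
      = fun x => 2 * (‖x‖ ^ (-β) * (u x * D x)) := by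
    funext x
    by_cases hxK : x ∈ K
    · rw [hgx x, hU1one x (hU1s hxK)]; ring
    · rw [hgfd0 x hxK]
      simp [hu0 x hxK]
  set p : EuclideanSpace ℝ (Fin N) → ℝ := fun x => ‖x‖ ^ (-α/2 - 1) * D x with hp
  set q : EuclideanSpace ℝ (Fin N) → ℝ := fun x => ‖x‖ ^ ((α - 2*β + 2)/2) * u x with hq
  have hD00 : D (0 : EuclideanSpace ℝ (Fin N)) = 0 := by simp [hD]
  have hpq : ∀ x : EuclideanSpace ℝ (Fin N), p x * q x = ‖x‖ ^ (-β) * (u x * D x) := by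
    intro x
    by_cases hx : x = 0
    · subst hx
      simp [hp, hq, hD00]
    · have hnp : (0:ℝ) < ‖x‖ := norm_pos_iff.mpr hx
      have hmm : ‖x‖ ^ (-α/2 - 1) * ‖x‖ ^ ((α - 2*β + 2)/2) = ‖x‖ ^ (-β) := by
        rw [← Real.rpow_add hnp]
        congr 1
        ring
      calc p x * q x = (‖x‖ ^ (-α/2 - 1) * ‖x‖ ^ ((α - 2*β + 2)/2)) * (u x * D x) := by
            simp only [hp, hq]; ring
        _ = ‖x‖ ^ (-β) * (u x * D x) := by rw [hmm]
  have key : 2 * ∫ x, p x * q x = -(((N:ℝ) - β) * ∫ x, ‖x‖ ^ (-β) * g x) := by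
    have h1 : ∫ x, p x * q x = ∫ x, ‖x‖ ^ (-β) * (u x * D x) := by
      congr 1; funext x; exact hpq x
    rw [h1, ← integral_const_mul, ← hdiv]
    congr 1
    funext x
    exact (congrFun hLHSeq x).symm
  -- integrability of the Cauchy-Schwarz integrands
  have hipp : Integrable (fun x => p x * p x) := by
    have hre : (fun x : EuclideanSpace ℝ (Fin N) => p x * p x)
        = fun x => ‖x‖ ^ (-α/2 - 1) * (‖x‖ ^ (-α/2 - 1) * (D x * D x)) := by
      funext x; simp only [hp]; ring
    rw [hre]
    exact hintw _ _ (hcontw _ _ (hDcont.mul hDcont) (fun x hx => by simp [hD0 x hx]))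
      (fun x hx => by simp [hD0 x hx])
  have hiqq : Integrable (fun x => q x * q x) := by
    have hre : (fun x : EuclideanSpace ℝ (Fin N) => q x * q x)
        = fun x => ‖x‖ ^ ((α - 2*β + 2)/2) * (‖x‖ ^ ((α - 2*β + 2)/2) * (u x * u x)) := by
      funext x; simp only [hq]; ring
    rw [hre]
    exact hintw _ _ (hcontw _ _ (hucont.mul hucont) (fun x hx => by simp [hu0 x hx]))
      (fun x hx => by simp [hu0 x hx])
  have hipq : Integrable (fun x => p x * q x) := by
    have hre : (fun x : EuclideanSpace ℝ (Fin N) => p x * q x)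
        = fun x => ‖x‖ ^ (-α/2 - 1) * (‖x‖ ^ ((α - 2*β + 2)/2) * (D x * u x)) := by
      funext x; simp only [hp, hq]; ring
    rw [hre]
    exact hintw _ _ (hcontw _ _ (hDcont.mul hucont) (fun x hx => by simp [hD0 x hx]))
      (fun x hx => by simp [hD0 x hx])
  have hcs := aux_cauchy_schwarz volume p q hipp hiqq hipq
  -- identify statement integrands
  have hgrad : ∀ x : EuclideanSpace ℝ (Fin N), (⟪x, gradient u x⟫ : ℝ) = D x := by
    intro x
    rw [real_inner_comm]
    unfold gradient
    exact InnerProductSpace.toDual_symm_apply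
  have hA : (∫ x : EuclideanSpace ℝ (Fin N), ‖x‖ ^ (-α) * (⟪x, gradient u x⟫ / ‖x‖) ^ 2)
      = ∫ x, p x * p x := by
    congr 1
    funext x
    rw [hgrad x]
    by_cases hx : x = 0
    · subst hx
      simp [hp, hD00]
    · have hnp : (0:ℝ) < ‖x‖ := norm_pos_iff.mpr hx
      have hmm : ‖x‖ ^ (-α/2 - 1) * ‖x‖ ^ (-α/2 - 1) = ‖x‖ ^ (-α) / ‖x‖ ^ (2:ℕ) := by
        rw [← Real.rpow_natCast ‖x‖ 2, ← Real.rpow_sub hnp, ← Real.rpow_add hnp]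
        congr 1
        ring
      have hne : (‖x‖ : ℝ) ≠ 0 := ne_of_gt hnp
      calc ‖x‖ ^ (-α) * (D x / ‖x‖) ^ 2 = (‖x‖ ^ (-α) / ‖x‖ ^ (2:ℕ)) * (D x * D x) := by
            ring
        _ = (‖x‖ ^ (-α/2 - 1) * ‖x‖ ^ (-α/2 - 1)) * (D x * D x) := by rw [hmm]
        _ = p x * p x := by simp only [hp]; ring
  have hB : (∫ x : EuclideanSpace ℝ (Fin N), ‖x‖ ^ (α - 2 * β + 2) * (u x) ^ 2)
      = ∫ x, q x * q x := by
    congr 1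
    funext x
    by_cases hx : x = 0
    · subst hx
      have hu00 : u (0 : EuclideanSpace ℝ (Fin N)) = 0 := hu0 _ h0
      simp [hq, hu00]
    · have hnp : (0:ℝ) < ‖x‖ := norm_pos_iff.mpr hx
      have hmm : ‖x‖ ^ ((α - 2*β + 2)/2) * ‖x‖ ^ ((α - 2*β + 2)/2) = ‖x‖ ^ (α - 2 * β + 2) := by
        rw [← Real.rpow_add hnp]
        congr 1
        ring
      calc ‖x‖ ^ (α - 2 * β + 2) * u x ^ 2
          = (‖x‖ ^ ((α - 2*β + 2)/2) * ‖x‖ ^ ((α - 2*β + 2)/2)) * (u x * u x) := by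
            rw [hmm]; ring
        _ = q x * q x := by simp only [hq]; ring
  have hC : (∫ x : EuclideanSpace ℝ (Fin N), ‖x‖ ^ (-β) * (u x) ^ 2)
      = ∫ x, ‖x‖ ^ (-β) * g x := by
    congr 1
    funext x
    simp only [hg]
    ring
  rw [hA, hB, hC]
  have h2 : (2 * ∫ x, p x * q x)^2 = (((N:ℝ) - β) * ∫ x, ‖x‖ ^ (-β) * g x)^2 := by
    rw [key]
    ring
  nlinarith [hcs, h2]
end

section
/- Let N ≥ 2 be an integer, 0 < R ≤ ∞, let ψ be a C¹ function on (0,R) with ψ > 0, let V, W be positive C¹ functions on (0,R), and let f be a positive C² function on (0,R) satisfying (r^{N−1} V(r) f′(r))′ + r^{N−1} W(r) f(r) = 0 on (0,R). Then for every smooth function a : ℝ → ℝ with compact support contained in (0,R): ∫_0^R V(r) a′(r)² ψ(r)^{N−1} dr = ∫_0^R W(r) a(r)² ψ(r)^{N−1} dr + ∫_0^R V(r) f(r)² ((a/f)′(r))² ψ(r)^{N−1} dr − (N−1) ∫_0^R V(r) (f′(r)/f(r)) (ψ′(r)/ψ(r) − 1/r) a(r)² ψ(r)^{N−1} dr. 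-/
open Real MeasureTheory
open scoped ENNReal

private lemma cont_of_glue {h : ℝ → ℝ} {S K : Set ℝ} (hSo : IsOpen S) (hKc : IsClosed K)
    (hKS : K ⊆ S) (hcont : ContinuousOn h S) (hz : ∀ r ∉ K, h r = 0) : Continuous h := by
  rw [continuous_iff_continuousAt]
  intro x
  by_cases hx : x ∈ S
  · exact hcont.continuousAt (hSo.mem_nhds hx)
  · have hxK : x ∉ K := fun hk => hx (hKS hk)
    have hev : h =ᶠ[nhds x] fun _ => (0:ℝ) :=
      Filter.eventuallyEq_of_mem (hKc.isOpen_compl.mem_nhds hxK) hz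
    exact hev.continuousAt

private lemma alg_key (m : ℕ) (r v v' w F F' F'' p p' A A' : ℝ)
    (hr : r ≠ 0) (hF : F ≠ 0) (hp : p ≠ 0) (hv : v ≠ 0)
    (hode : (((m:ℝ)+1) * r ^ m * v + r ^ (m+1) * v') * F' + r ^ (m+1) * v * F''
        + r ^ (m+1) * w * F = 0) :
    v * A' ^ 2 * p ^ (m+1)
      = w * A ^ 2 * p ^ (m+1)
        + v * F ^ 2 * ((A' * F - A * F') / F ^ 2) ^ 2 * p ^ (m+1)
        - ((m:ℝ)+1) * (v * (F' / F) * (p' / p - 1 / r) * A ^ 2 * p ^ (m+1))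
        + ((((v' * F' + v * F'') * p ^ (m+1) + v * F' * (((m:ℝ)+1) * p ^ m * p'))
              * A ^ 2 + v * F' * p ^ (m+1) * (2 * A * A')) * F
            - v * F' * p ^ (m+1) * A ^ 2 * F') / F ^ 2 := by
  have hrm : r ^ (m+1) * v ≠ 0 := mul_ne_zero (pow_ne_zero _ hr) hv
  have hF'' : F'' = -((((m:ℝ)+1) * r ^ m * v + r ^ (m+1) * v') * F'
      + r ^ (m+1) * w * F) / (r ^ (m+1) * v) := by
    field_simp
    linarith [hode]
  subst hF''
  field_simp
  ring

theorem stmt_12 (N : ℕ) (hN : 2 ≤ N) (R : ℝ≥0∞) (hR : 0 < R)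
    (S : Set ℝ) (hS : S = {r : ℝ | 0 < r ∧ ENNReal.ofReal r < R})
    (ψ : ℝ → ℝ) (hψ : ContDiffOn ℝ 1 ψ S) (hψpos : ∀ r ∈ S, 0 < ψ r)
    (V W f : ℝ → ℝ)
    (hV : ContDiffOn ℝ 1 V S) (hVpos : ∀ r ∈ S, 0 < V r)
    (hW : ContDiffOn ℝ 1 W S) (hWpos : ∀ r ∈ S, 0 < W r)
    (hf : ContDiffOn ℝ 2 f S) (hfpos : ∀ r ∈ S, 0 < f r)
    (hode : ∀ r ∈ S,
      deriv (fun s => s ^ (N - 1) * V s * deriv f s) r + r ^ (N - 1) * W r * f r = 0)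
    (a : ℝ → ℝ) (ha : ContDiff ℝ (⊤ : ℕ∞) a) (hac : HasCompactSupport a)
    (hsupp : tsupport a ⊆ S) :
    ∫ r in S, V r * (deriv a r) ^ 2 * ψ r ^ (N - 1)
      = (∫ r in S, W r * (a r) ^ 2 * ψ r ^ (N - 1))
        + (∫ r in S, V r * (f r) ^ 2 * (deriv (fun s => a s / f s) r) ^ 2 * ψ r ^ (N - 1))
        - ((N : ℝ) - 1) * ∫ r in S, V r * (deriv f r / f r)
            * (deriv ψ r / ψ r - 1 / r) * (a r) ^ 2 * ψ r ^ (N - 1) := by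
  obtain ⟨m, hm⟩ : ∃ m, N - 1 = m + 1 := ⟨N - 2, by omega⟩
  have hmN : (N : ℝ) - 1 = (m : ℝ) + 1 := by
    have hN2 : N = m + 2 := by omega
    subst hN2; push_cast; ring
  simp only [hm, hmN] at hode ⊢
  -- basic facts on S
  have hSopen : IsOpen S := by
    rw [hS, Set.setOf_and]
    exact (isOpen_lt continuous_const continuous_id).inter
      (isOpen_lt ENNReal.continuous_ofReal continuous_const)
  have hrpos : ∀ r ∈ S, 0 < r := by intro r hr; rw [hS] at hr; exact hr.1
  -- we work with K = tsupport a
  set K := tsupport a with hK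
  have hKc : IsClosed K := isClosed_tsupport a
  have hz_a : ∀ x ∉ K, a x = 0 := fun x hx => image_eq_zero_of_notMem_tsupport hx
  have hev_a : ∀ x ∉ K, a =ᶠ[nhds x] fun _ => (0:ℝ) := fun x hx =>
    Filter.eventuallyEq_of_mem (hKc.isOpen_compl.mem_nhds hx) hz_a
  have hz_a' : ∀ x ∉ K, deriv a x = 0 := by
    intro x hx
    rw [(hev_a x hx).deriv_eq]
    exact deriv_const x 0
  have hz_u' : ∀ x ∉ K, deriv (fun s => a s / f s) x = 0 := by
    intro x hx
    have : (fun s => a s / f s) =ᶠ[nhds x] fun _ => (0:ℝ) :=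
      (hev_a x hx).mono (fun y hy => by simp [hy])
    rw [this.deriv_eq]
    exact deriv_const x 0
  -- differentiability facts
  have had : ∀ r, HasDerivAt a (deriv a r) r := fun r =>
    ((ha.differentiable (by simp)) r).hasDerivAt
  have hVd : ∀ r ∈ S, HasDerivAt V (deriv V r) r := fun r hr =>
    (((hV.differentiableOn one_ne_zero) r hr).differentiableAt (hSopen.mem_nhds hr)).hasDerivAt
  have hψd : ∀ r ∈ S, HasDerivAt ψ (deriv ψ r) r := fun r hr =>
    (((hψ.differentiableOn one_ne_zero) r hr).differentiableAt (hSopen.mem_nhds hr)).hasDerivAt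
  have hfd : ∀ r ∈ S, HasDerivAt f (deriv f r) r := fun r hr =>
    (((hf.differentiableOn two_ne_zero) r hr).differentiableAt (hSopen.mem_nhds hr)).hasDerivAt
  have hf1 : ContDiffOn ℝ 1 (deriv f) S := hf.deriv_of_isOpen hSopen le_rfl
  have hfd' : ∀ r ∈ S, HasDerivAt (deriv f) (deriv (deriv f) r) r := fun r hr =>
    (((hf1.differentiableOn one_ne_zero) r hr).differentiableAt (hSopen.mem_nhds hr)).hasDerivAt
  have hud : ∀ r ∈ S, HasDerivAt (fun s => a s / f s)
      ((deriv a r * f r - a r * deriv f r) / f r ^ 2) r := fun r hr =>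
    (had r).div (hfd r hr) (hfpos r hr).ne'
  -- the auxiliary function g and its derivative D
  set g : ℝ → ℝ := fun s => V s * deriv f s * ψ s ^ (m+1) * a s ^ 2 / f s with hg_def
  set D : ℝ → ℝ := fun r =>
    V r * (deriv a r) ^ 2 * ψ r ^ (m+1)
      - W r * a r ^ 2 * ψ r ^ (m+1)
      - V r * f r ^ 2 * (deriv (fun s => a s / f s) r) ^ 2 * ψ r ^ (m+1)
      + ((m:ℝ)+1) * (V r * (deriv f r / f r) * (deriv ψ r / ψ r - 1 / r)
          * a r ^ 2 * ψ r ^ (m+1)) with hD_def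
  -- pointwise identity on S
  have hgd : ∀ r, HasDerivAt g (D r) r := by
    intro r
    by_cases hr : r ∈ S
    · -- on S : explicit derivative plus the algebraic identity
      have hODE := hode r hr
      have hder : HasDerivAt (fun s => s ^ (m+1) * V s * deriv f s)
          (((↑(m+1) * r ^ (m+1-1)) * V r + r ^ (m+1) * deriv V r) * deriv f r
            + r ^ (m+1) * V r * deriv (deriv f) r) r :=
        ((hasDerivAt_pow (m+1) r).mul (hVd r hr)).mul (hfd' r hr)
      rw [hder.deriv] at hODE
      have hODE' : (((m:ℝ)+1) * r ^ m * V r + r ^ (m+1) * deriv V r) * deriv f r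
          + r ^ (m+1) * V r * deriv (deriv f) r + r ^ (m+1) * W r * f r = 0 := by
        push_cast [Nat.add_sub_cancel] at hODE
        linarith [hODE]
      have hkey := alg_key m r (V r) (deriv V r) (W r) (f r) (deriv f r)
        (deriv (deriv f) r) (ψ r) (deriv ψ r) (a r) (deriv a r)
        (hrpos r hr).ne' (hfpos r hr).ne' (hψpos r hr).ne' (hVpos r hr).ne' hODE'
      have hgD : HasDerivAt g
          (((((deriv V r * deriv f r + V r * deriv (deriv f) r) * ψ r ^ (m+1)
              + V r * deriv f r * (((m:ℝ)+1) * ψ r ^ m * deriv ψ r)) * a r ^ 2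
              + V r * deriv f r * ψ r ^ (m+1) * (2 * a r * deriv a r)) * f r
            - V r * deriv f r * ψ r ^ (m+1) * a r ^ 2 * deriv f r) / f r ^ 2) r := by
        have h := ((((hVd r hr).mul (hfd' r hr)).mul ((hψd r hr).pow (m+1))).mul
          ((had r).pow 2)).div (hfd r hr) (hfpos r hr).ne'
        refine h.congr_deriv ?_
        simp only [Pi.mul_apply, Pi.pow_apply, Nat.add_sub_cancel, pow_one]
        push_cast
        ring
      have : D r = ((((deriv V r * deriv f r + V r * deriv (deriv f) r) * ψ r ^ (m+1)
              + V r * deriv f r * (((m:ℝ)+1) * ψ r ^ m * deriv ψ r)) * a r ^ 2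
              + V r * deriv f r * ψ r ^ (m+1) * (2 * a r * deriv a r)) * f r
            - V r * deriv f r * ψ r ^ (m+1) * a r ^ 2 * deriv f r) / f r ^ 2 := by
        simp only [hD_def]
        rw [(hud r hr).deriv]
        linarith [hkey]
      rw [this]
      exact hgD
    · -- off S : everything vanishes near r
      have hxK : r ∉ K := fun hk => hr (hsupp hk)
      have hgev : g =ᶠ[nhds r] fun _ => (0:ℝ) :=
        (hev_a r hxK).mono (fun y hy => by simp [hg_def, hy])
      have hD0 : D r = 0 := by
        simp [hD_def, hz_a r hxK, hz_a' r hxK, hz_u' r hxK]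
      rw [hD0]
      exact (hasDerivAt_const r (0:ℝ)).congr_of_eventuallyEq hgev
  -- continuity of the integrands
  have ha' := ha.continuous_deriv (by simp)
  have hac' := ha.continuous
  have hψpow : ContinuousOn (fun r => ψ r ^ (m+1)) S := (hψ.continuousOn).pow _
  have hψ'c : ContinuousOn (deriv ψ) S := hψ.continuousOn_deriv_of_isOpen hSopen le_rfl
  have hf'c : ContinuousOn (deriv f) S := hf1.continuousOn
  have hfc : ContinuousOn f S := hf.continuousOn
  have hu'c : ContinuousOn (fun r => deriv (fun s => a s / f s) r) S := by
    have hcont : ContinuousOn (fun r => (deriv a r * f r - a r * deriv f r) / f r ^ 2) S :=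
      ((ha'.continuousOn.mul hfc).sub (hac'.continuousOn.mul hf'c)).div (hfc.pow 2)
        (fun r hr => pow_ne_zero 2 (hfpos r hr).ne')
    exact hcont.congr (fun r hr => (hud r hr).deriv)
  have hKS : K ⊆ S := hsupp
  have hcs : ∀ {h : ℝ → ℝ}, (∀ x ∉ K, h x = 0) → HasCompactSupport h := fun hz =>
    HasCompactSupport.intro hac hz
  -- the four integrands
  have hi1 : Integrable (fun r => V r * (deriv a r) ^ 2 * ψ r ^ (m+1)) := by
    refine Continuous.integrable_of_hasCompactSupport
      (cont_of_glue hSopen hKc hKS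
        (((hV.continuousOn).mul (ha'.continuousOn.pow 2)).mul hψpow) ?_) (hcs ?_) <;>
    · intro x hx; simp [hz_a' x hx]
  have hi2 : Integrable (fun r => W r * a r ^ 2 * ψ r ^ (m+1)) := by
    refine Continuous.integrable_of_hasCompactSupport
      (cont_of_glue hSopen hKc hKS
        (((hW.continuousOn).mul (hac'.continuousOn.pow 2)).mul hψpow) ?_) (hcs ?_) <;>
    · intro x hx; simp [hz_a x hx]
  have hi3 : Integrable (fun r => V r * f r ^ 2 * (deriv (fun s => a s / f s) r) ^ 2
      * ψ r ^ (m+1)) := by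
    refine Continuous.integrable_of_hasCompactSupport
      (cont_of_glue hSopen hKc hKS
        ((((hV.continuousOn).mul (hfc.pow 2)).mul
          (hu'c.pow 2)).mul hψpow) ?_) (hcs ?_) <;>
    · intro x hx; simp [hz_u' x hx]
  have hi4 : Integrable (fun r => V r * (deriv f r / f r) * (deriv ψ r / ψ r - 1 / r)
      * a r ^ 2 * ψ r ^ (m+1)) := by
    refine Continuous.integrable_of_hasCompactSupport
      (cont_of_glue hSopen hKc hKS ?_ ?_) (hcs ?_)
    · refine ((((hV.continuousOn).mul (hf'c.div hfc
        (fun r hr => (hfpos r hr).ne'))).mul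
        ((hψ'c.div (hψ.continuousOn) (fun r hr => (hψpos r hr).ne')).sub
          (continuousOn_const.div continuousOn_id (fun r hr => (hrpos r hr).ne')))).mul
        (hac'.continuousOn.pow 2)).mul hψpow
    · intro x hx; simp [hz_a x hx]
    · intro x hx; simp [hz_a x hx]
  -- g is continuous with compact support
  have hgc : Continuous g := by
    refine cont_of_glue hSopen hKc hKS ?_ ?_
    · exact ((((hV.continuousOn).mul hf'c).mul hψpow).mul (hac'.continuousOn.pow 2)).div
        hfc (fun r hr => (hfpos r hr).ne')
    · intro x hx; simp [hg_def, hz_a x hx]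
  have hgcs : HasCompactSupport g := hcs (fun x hx => by simp [hg_def, hz_a x hx])
  have hgi : Integrable g := hgc.integrable_of_hasCompactSupport hgcs
  have hDi : Integrable D := by
    rw [hD_def]
    exact ((hi1.sub hi2).sub hi3).add (hi4.const_mul _)
  -- the integral of D over ℝ equals zero
  have hDzero : ∫ x, D x = 0 := integral_eq_zero_of_hasDerivAt_of_integrable hgd hDi hgi
  have hDS : ∫ x in S, D x = 0 := by
    rw [setIntegral_eq_integral_of_forall_compl_eq_zero]
    · exact hDzero
    · intro x hx
      have hxK : x ∉ K := fun hk => hx (hKS hk)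
      simp [hD_def, hz_a x hxK, hz_a' x hxK, hz_u' x hxK]
  -- split the integral of D
  have hi12 : Integrable (fun r => V r * (deriv a r) ^ 2 * ψ r ^ (m+1)
      - W r * a r ^ 2 * ψ r ^ (m+1)) := hi1.sub hi2
  have hi123 : Integrable (fun r => V r * (deriv a r) ^ 2 * ψ r ^ (m+1)
      - W r * a r ^ 2 * ψ r ^ (m+1)
      - V r * f r ^ 2 * (deriv (fun s => a s / f s) r) ^ 2 * ψ r ^ (m+1)) := hi12.sub hi3
  have hi4' : Integrable (fun r => ((m:ℝ)+1) * (V r * (deriv f r / f r)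
      * (deriv ψ r / ψ r - 1 / r) * a r ^ 2 * ψ r ^ (m+1))) := hi4.const_mul _
  simp only [hD_def] at hDS
  rw [integral_add hi123.integrableOn hi4'.integrableOn,
    integral_sub hi12.integrableOn hi3.integrableOn,
    integral_sub hi1.integrableOn hi2.integrableOn,
    integral_const_mul] at hDS
  linarith [hDS]
end

section
/- Let N ≥ 2 be an integer, 0 < R ≤ ∞, let ψ be a C¹ function on (0,R) with ψ > 0, let V, W be positive C¹ functions on (0,R), let f be a positive C² function on (0,R) satisfying (r^{N−1} V(r) f′(r))′ + r^{N−1} W(r) f(r) = 0 on (0,R), and let j ≥ 0 and n ≥ j+1 be integers. Then for every smooth function a : ℝ → ℝ with compact support contained in (0,R): ∫_0^R V(r) a′(r)² ψ(r)^{N−1} dr + n(N+n−2) ∫_0^R V(r) a(r)² ψ(r)^{N−3} dr ≥ ∫_0^R W(r) a(r)² ψ(r)^{N−1} dr + (j+1)(N+j−1) ∫_0^R V(r) a(r)² ψ(r)^{N−3} dr + ∫_0^R V(r) f(r)² ((a/f)′(r))² ψ(r)^{N−1} dr − (N−1) ∫_0^R V(r) (f′(r)/f(r)) (ψ′(r)/ψ(r)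 − 1/r) a(r)² ψ(r)^{N−1} dr. -/
open Real MeasureTheory
open scoped ENNReal

private lemma aux_hasDerivAt (m : ℕ) (V W f ψ a : ℝ → ℝ) (r : ℝ)
    (hr : r ≠ 0) (hfne : f r ≠ 0) (hψne : ψ r ≠ 0) (hVne : V r ≠ 0)
    (hV1 : HasDerivAt V (deriv V r) r)
    (hf1 : HasDerivAt f (deriv f r) r)
    (hf2 : HasDerivAt (deriv f) (deriv (deriv f) r) r)
    (hp1 : HasDerivAt ψ (deriv ψ r) r)
    (ha1 : HasDerivAt a (deriv a r) r)
    (hode : deriv (fun s => s ^ (m+1) * V s * deriv f s) r + r ^ (m+1) * W r * f r = 0) :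
    HasDerivAt (fun s => V s * (deriv f s / f s) * a s ^ 2 * ψ s ^ (m+1))
      (V r * deriv a r ^ 2 * ψ r ^ (m+1) - W r * a r ^ 2 * ψ r ^ (m+1)
        - V r * f r ^ 2 * (deriv (fun s => a s / f s) r) ^ 2 * ψ r ^ (m+1)
        + ((m:ℝ)+1) * (V r * (deriv f r / f r) * (deriv ψ r / ψ r - 1/r) * a r ^ 2
            * ψ r ^ (m+1))) r := by
  have hq : HasDerivAt (fun s => a s / f s) ((deriv a r * f r - a r * deriv f r)/ f r ^ 2) r :=
    ha1.div hf1 hfne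
  have hΦ := ((hasDerivAt_pow (m+1) r).mul hV1).mul hf2
  have E := hode
  rw [show (fun s => s ^ (m+1) * V s * deriv f s) = ((fun x => x ^ (m + 1)) * V * deriv f) from rfl, hΦ.deriv] at E
  push_cast [Pi.mul_apply] at E
  have hf'' : deriv (deriv f) r =
      -((((m:ℝ)+1) * r^m * V r + r^(m+1) * deriv V r) * deriv f r + r^(m+1) * W r * f r)
        / (r^(m+1) * V r) := by
    field_simp
    linear_combination E
  have hG := ((hV1.mul (hf2.div hf1 hfne)).mul (ha1.pow 2)).mul (hp1.pow (m+1))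
  refine hG.congr_deriv ?_
  simp only [Pi.mul_apply, Pi.div_apply, Pi.pow_apply, Nat.add_sub_cancel, Nat.cast_add, Nat.cast_one]
  rw [hq.deriv, hf'']
  field_simp
  ring

theorem stmt_13 (N : ℕ) (hN : 2 ≤ N) (R : ℝ≥0∞) (hR : 0 < R)
    (S : Set ℝ) (hS : S = {r : ℝ | 0 < r ∧ ENNReal.ofReal r < R})
    (ψ : ℝ → ℝ) (hψ : ContDiffOn ℝ 1 ψ S) (hψpos : ∀ r ∈ S, 0 < ψ r)
    (V W f : ℝ → ℝ)
    (hV : ContDiffOn ℝ 1 V S) (hVpos : ∀ r ∈ S, 0 < V r)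
    (hW : ContDiffOn ℝ 1 W S) (hWpos : ∀ r ∈ S, 0 < W r)
    (hf : ContDiffOn ℝ 2 f S) (hfpos : ∀ r ∈ S, 0 < f r)
    (hode : ∀ r ∈ S,
      deriv (fun s => s ^ (N - 1) * V s * deriv f s) r + r ^ (N - 1) * W r * f r = 0)
    (j n : ℕ) (hn : j + 1 ≤ n)
    (a : ℝ → ℝ) (ha : ContDiff ℝ (⊤ : ℕ∞) a) (hac : HasCompactSupport a)
    (hsupp : tsupport a ⊆ S) :
    (∫ r in S, V r * (deriv a r) ^ 2 * ψ r ^ (N - 1))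
      + ((n * (N + n - 2) : ℕ) : ℝ) * ∫ r in S, V r * (a r) ^ 2 * ψ r ^ ((N : ℤ) - 3)
    ≥ (∫ r in S, W r * (a r) ^ 2 * ψ r ^ (N - 1))
        + (((j + 1) * (N + j - 1) : ℕ) : ℝ)
            * (∫ r in S, V r * (a r) ^ 2 * ψ r ^ ((N : ℤ) - 3))
        + (∫ r in S, V r * (f r) ^ 2 * (deriv (fun s => a s / f s) r) ^ 2 * ψ r ^ (N - 1))
        - ((N : ℝ) - 1) * ∫ r in S, V r * (deriv f r / f r)
            * (deriv ψ r / ψ r - 1 / r) * (a r) ^ 2 * ψ r ^ (N - 1) := by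
  obtain ⟨m, rfl⟩ : ∃ m, N = m + 2 := ⟨N - 2, by omega⟩
  have e1 : m + 2 - 1 = m + 1 := rfl
  have e3 : ((m + 2 : ℕ) : ℤ) - 3 = (m : ℤ) - 1 := by push_cast; ring
  simp only [e1] at hode ⊢
  simp only [e3]
  -- basic facts about S
  have hS_open : IsOpen S := by
    rw [hS]
    have : {r : ℝ | 0 < r ∧ ENNReal.ofReal r < R}
        = Set.Ioi 0 ∩ ENNReal.ofReal ⁻¹' Set.Iio R := rfl
    rw [this]
    exact isOpen_Ioi.inter (isOpen_Iio.preimage ENNReal.continuous_ofReal)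
  have hSm : MeasurableSet S := hS_open.measurableSet
  have hSr : ∀ r ∈ S, 0 < r := by intro r hr; rw [hS] at hr; exact hr.1
  have hKc : IsCompact (tsupport a) := hac
  -- derivative helpers
  have hderiv : ∀ g : ℝ → ℝ, ContDiffOn ℝ 1 g S → ∀ r ∈ S, HasDerivAt g (deriv g r) r := by
    intro g hg r hr
    exact ((hg.differentiableOn one_ne_zero).differentiableAt (hS_open.mem_nhds hr)).hasDerivAt
  have hf' : ContDiffOn ℝ 1 (deriv f) S := hf.deriv_of_isOpen hS_open (by norm_num)
  have hcd : ∀ g : ℝ → ℝ, ContDiffOn ℝ 1 g S → ContinuousOn (deriv g) S := fun g hg =>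
    (hg.deriv_of_isOpen (m := 0) hS_open (by norm_num)).continuousOn
  have ha' : Continuous (deriv a) := ha.continuous_deriv (by simp)
  have haD : ∀ r : ℝ, HasDerivAt a (deriv a r) r := fun r =>
    ((ha.differentiable (by simp)) r).hasDerivAt
  have hfne : ∀ r ∈ S, f r ≠ 0 := fun r hr => (hfpos r hr).ne'
  have hψne : ∀ r ∈ S, ψ r ≠ 0 := fun r hr => (hψpos r hr).ne'
  -- off-support vanishing
  have hoff : ∀ r ∉ tsupport a, a r = 0 := fun r hr => image_eq_zero_of_notMem_tsupport hr
  have hoffd : ∀ r ∉ tsupport a, deriv a r = 0 := by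
    intro r hr
    have h := notMem_tsupport_iff_eventuallyEq.mp hr
    rw [h.deriv_eq]
    exact deriv_const r 0
  have hoffq : ∀ r ∉ tsupport a, deriv (fun s => a s / f s) r = 0 := by
    intro r hr
    have h := notMem_tsupport_iff_eventuallyEq.mp hr
    have h2 : (fun s => a s / f s) =ᶠ[nhds r] 0 := by
      filter_upwards [h] with x hx
      simp only [Pi.zero_apply] at hx ⊢
      simp [hx]
    rw [h2.deriv_eq]
    exact deriv_const r 0
  -- the four integrands
  have hqder : ∀ r ∈ S, deriv (fun s => a s / f s) r
      = (deriv a r * f r - a r * deriv f r) / f r ^ 2 := fun r hr =>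
    ((haD r).div (hderiv f (hf.of_le (by norm_num)) r hr) (hfne r hr)).deriv
  -- pointwise derivative identity
  have hP : ∀ r ∈ S, HasDerivAt (fun s => V s * (deriv f s / f s) * a s ^ 2 * ψ s ^ (m+1))
      (V r * deriv a r ^ 2 * ψ r ^ (m+1) - W r * a r ^ 2 * ψ r ^ (m+1)
        - V r * f r ^ 2 * (deriv (fun s => a s / f s) r) ^ 2 * ψ r ^ (m+1)
        + ((m:ℝ)+1) * (V r * (deriv f r / f r) * (deriv ψ r / ψ r - 1/r) * a r ^ 2
            * ψ r ^ (m+1))) r := by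
    intro r hr
    exact aux_hasDerivAt m V W f ψ a r (hSr r hr).ne' (hfne r hr) (hψne r hr)
      (hVpos r hr).ne' (hderiv V hV r hr) (hderiv f (hf.of_le (by norm_num)) r hr)
      (hderiv (deriv f) hf' r hr) (hderiv ψ hψ r hr) (haD r) (hode r hr)
  have hDzero : ∀ r ∉ tsupport a,
      V r * deriv a r ^ 2 * ψ r ^ (m+1) - W r * a r ^ 2 * ψ r ^ (m+1)
        - V r * f r ^ 2 * (deriv (fun s => a s / f s) r) ^ 2 * ψ r ^ (m+1)
        + ((m:ℝ)+1) * (V r * (deriv f r / f r) * (deriv ψ r / ψ r - 1/r) * a r ^ 2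
            * ψ r ^ (m+1)) = 0 := by
    intro r hr
    rw [hoff r hr, hoffd r hr, hoffq r hr]
    ring
  have hGzero : ∀ r ∉ tsupport a,
      V r * (deriv f r / f r) * a r ^ 2 * ψ r ^ (m+1) = 0 := by
    intro r hr
    rw [hoff r hr]
    ring
  have hPall : ∀ r : ℝ, HasDerivAt (fun s => V s * (deriv f s / f s) * a s ^ 2 * ψ s ^ (m+1))
      (V r * deriv a r ^ 2 * ψ r ^ (m+1) - W r * a r ^ 2 * ψ r ^ (m+1)
        - V r * f r ^ 2 * (deriv (fun s => a s / f s) r) ^ 2 * ψ r ^ (m+1)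
        + ((m:ℝ)+1) * (V r * (deriv f r / f r) * (deriv ψ r / ψ r - 1/r) * a r ^ 2
            * ψ r ^ (m+1))) r := by
    intro r
    by_cases hr : r ∈ S
    · exact hP r hr
    · have hrK : r ∉ tsupport a := fun h => hr (hsupp h)
      have h := notMem_tsupport_iff_eventuallyEq.mp hrK
      have hG0 : (fun s => V s * (deriv f s / f s) * a s ^ 2 * ψ s ^ (m+1))
          =ᶠ[nhds r] fun _ => (0:ℝ) := by
        filter_upwards [h] with x hx
        simp only [Pi.zero_apply] at hx
        simp [hx]
      have h0 : HasDerivAt (fun s => V s * (deriv f s / f s) * a s ^ 2 * ψ s ^ (m+1)) 0 r :=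
        (hasDerivAt_const r (0:ℝ)).congr_of_eventuallyEq hG0
      rw [hDzero r hrK]
      exact h0
  -- continuity of the integrands on S
  have hfc : ContinuousOn f S := hf.continuousOn
  have hf'c : ContinuousOn (deriv f) S := hf'.continuousOn
  have hψc : ContinuousOn ψ S := hψ.continuousOn
  have hψ'c : ContinuousOn (deriv ψ) S := hcd ψ hψ
  have hVc : ContinuousOn V S := hV.continuousOn
  have hqc : ContinuousOn (deriv (fun s => a s / f s)) S := by
    have base : ContinuousOn (fun r => (deriv a r * f r - a r * deriv f r) / f r ^ 2) S :=
      ((ha'.continuousOn.mul hfc).sub ((ha.continuous.continuousOn).mul hf'c)).div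
        (hfc.pow 2) (fun r hr => pow_ne_zero _ (hfne r hr))
    exact base.congr hqder
  have c1 : ContinuousOn (fun r => V r * deriv a r ^ 2 * ψ r ^ (m+1)) S :=
    (hVc.mul (ha'.continuousOn.pow 2)).mul (hψc.pow (m+1))
  have c2 : ContinuousOn (fun r => W r * a r ^ 2 * ψ r ^ (m+1)) S :=
    (hW.continuousOn.mul ((ha.continuous.continuousOn).pow 2)).mul (hψc.pow (m+1))
  have c3 : ContinuousOn (fun r =>
      V r * f r ^ 2 * (deriv (fun s => a s / f s) r) ^ 2 * ψ r ^ (m+1)) S :=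
    ((hVc.mul (hfc.pow 2)).mul (hqc.pow 2)).mul (hψc.pow (m+1))
  have c4 : ContinuousOn (fun r =>
      V r * (deriv f r / f r) * (deriv ψ r / ψ r - 1/r) * a r ^ 2 * ψ r ^ (m+1)) S := by
    have hinv : ContinuousOn (fun r : ℝ => 1 / r) S :=
      continuousOn_const.div continuousOn_id (fun r hr => (hSr r hr).ne')
    exact (((hVc.mul (hf'c.div hfc hfne)).mul
      ((hψ'c.div hψc hψne).sub hinv)).mul ((ha.continuous.continuousOn).pow 2)).mul
      (hψc.pow (m+1))
  -- integrability
  have hint : ∀ g : ℝ → ℝ, ContinuousOn g S → (∀ r ∉ tsupport a, g r = 0) →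
      IntegrableOn g S := by
    intro g hg hzero
    have hKint : IntegrableOn g (tsupport a) := (hg.mono hsupp).integrableOn_compact hKc
    have h2 : IntegrableOn g (S \ tsupport a) := by
      refine (integrableOn_congr_fun (g := fun _ => (0:ℝ)) ?_
        (hSm.diff hKc.measurableSet)).mpr (integrableOn_zero)
      intro x hx; exact hzero x hx.2
    have hun : S = tsupport a ∪ (S \ tsupport a) := (Set.union_diff_cancel hsupp).symm
    rw [hun]; exact hKint.union h2
  have i1 := hint _ c1 (fun r hr => by rw [hoffd r hr]; ring)
  have i2 := hint _ c2 (fun r hr => by rw [hoff r hr]; ring)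
  have i3 := hint _ c3 (fun r hr => by rw [hoffq r hr]; ring)
  have i4 := hint _ c4 (fun r hr => by rw [hoff r hr]; ring)
  -- continuity of D everywhere
  have hDS : ContinuousOn (fun r =>
      V r * deriv a r ^ 2 * ψ r ^ (m+1) - W r * a r ^ 2 * ψ r ^ (m+1)
        - V r * f r ^ 2 * (deriv (fun s => a s / f s) r) ^ 2 * ψ r ^ (m+1)
        + ((m:ℝ)+1) * (V r * (deriv f r / f r) * (deriv ψ r / ψ r - 1/r) * a r ^ 2
            * ψ r ^ (m+1))) S :=
    ((c1.sub c2).sub c3).add (continuousOn_const.mul c4)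
  have hDc : Continuous (fun r =>
      V r * deriv a r ^ 2 * ψ r ^ (m+1) - W r * a r ^ 2 * ψ r ^ (m+1)
        - V r * f r ^ 2 * (deriv (fun s => a s / f s) r) ^ 2 * ψ r ^ (m+1)
        + ((m:ℝ)+1) * (V r * (deriv f r / f r) * (deriv ψ r / ψ r - 1/r) * a r ^ 2
            * ψ r ^ (m+1))) := by
    rw [continuous_iff_continuousAt]
    intro x
    by_cases hx : x ∈ S
    · exact hDS.continuousAt (hS_open.mem_nhds hx)
    · have hxK : x ∉ tsupport a := fun h => hx (hsupp h)
      have hopen : IsOpen (tsupport a)ᶜ := (isClosed_tsupport a).isOpen_compl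
      have hev : (fun _ => (0:ℝ)) =ᶠ[nhds x] (fun r =>
          V r * deriv a r ^ 2 * ψ r ^ (m+1) - W r * a r ^ 2 * ψ r ^ (m+1)
            - V r * f r ^ 2 * (deriv (fun s => a s / f s) r) ^ 2 * ψ r ^ (m+1)
            + ((m:ℝ)+1) * (V r * (deriv f r / f r) * (deriv ψ r / ψ r - 1/r) * a r ^ 2
                * ψ r ^ (m+1))) := by
        filter_upwards [hopen.mem_nhds hxK] with y hy
        exact (hDzero y hy).symm
      exact continuousAt_const.congr hev
  -- the integral of D over S vanishes
  have hzero_int : ∫ r in S, (V r * deriv a r ^ 2 * ψ r ^ (m+1)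
        - W r * a r ^ 2 * ψ r ^ (m+1)
        - V r * f r ^ 2 * (deriv (fun s => a s / f s) r) ^ 2 * ψ r ^ (m+1)
        + ((m:ℝ)+1) * (V r * (deriv f r / f r) * (deriv ψ r / ψ r - 1/r) * a r ^ 2
            * ψ r ^ (m+1))) = 0 := by
    obtain ⟨M, hM⟩ := hKc.isBounded.subset_closedBall 0
    set b : ℝ := |M| + 1 with hb
    have hKb : tsupport a ⊆ Set.Ioo (-b) b := by
      intro x hx
      have h1 := hM hx
      rw [Metric.mem_closedBall, Real.dist_eq, sub_zero] at h1
      have h2 := abs_le.mp (le_trans h1 (le_abs_self M))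
      constructor <;> [linarith [h2.1]; linarith [h2.2]]
    have hstep1 : ∫ r in S, (V r * deriv a r ^ 2 * ψ r ^ (m+1)
          - W r * a r ^ 2 * ψ r ^ (m+1)
          - V r * f r ^ 2 * (deriv (fun s => a s / f s) r) ^ 2 * ψ r ^ (m+1)
          + ((m:ℝ)+1) * (V r * (deriv f r / f r) * (deriv ψ r / ψ r - 1/r) * a r ^ 2
              * ψ r ^ (m+1)))
        = ∫ r, (V r * deriv a r ^ 2 * ψ r ^ (m+1) - W r * a r ^ 2 * ψ r ^ (m+1)
          - V r * f r ^ 2 * (deriv (fun s => a s / f s) r) ^ 2 * ψ r ^ (m+1)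
          + ((m:ℝ)+1) * (V r * (deriv f r / f r) * (deriv ψ r / ψ r - 1/r) * a r ^ 2
              * ψ r ^ (m+1))) := by
      apply setIntegral_eq_integral_of_forall_compl_eq_zero
      intro x hx
      exact hDzero x (fun h => hx (hsupp h))
    have hstep2 : ∫ r, (V r * deriv a r ^ 2 * ψ r ^ (m+1) - W r * a r ^ 2 * ψ r ^ (m+1)
          - V r * f r ^ 2 * (deriv (fun s => a s / f s) r) ^ 2 * ψ r ^ (m+1)
          + ((m:ℝ)+1) * (V r * (deriv f r / f r) * (deriv ψ r / ψ r - 1/r) * a r ^ 2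
              * ψ r ^ (m+1)))
        = ∫ r in Set.Ioc (-b) b, (V r * deriv a r ^ 2 * ψ r ^ (m+1)
          - W r * a r ^ 2 * ψ r ^ (m+1)
          - V r * f r ^ 2 * (deriv (fun s => a s / f s) r) ^ 2 * ψ r ^ (m+1)
          + ((m:ℝ)+1) * (V r * (deriv f r / f r) * (deriv ψ r / ψ r - 1/r) * a r ^ 2
              * ψ r ^ (m+1))) := by
      refine (setIntegral_eq_integral_of_forall_compl_eq_zero ?_).symm
      intro x hx
      refine hDzero x (fun h => hx ?_)
      have := hKb h
      exact Set.mem_Ioc.mpr ⟨this.1, this.2.le⟩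
    have hble : -b ≤ b := by
      have := abs_nonneg M
      rw [hb]; linarith
    have hstep3 : ∫ r in Set.Ioc (-b) b, (V r * deriv a r ^ 2 * ψ r ^ (m+1)
          - W r * a r ^ 2 * ψ r ^ (m+1)
          - V r * f r ^ 2 * (deriv (fun s => a s / f s) r) ^ 2 * ψ r ^ (m+1)
          + ((m:ℝ)+1) * (V r * (deriv f r / f r) * (deriv ψ r / ψ r - 1/r) * a r ^ 2
              * ψ r ^ (m+1)))
        = ∫ r in (-b)..b, (V r * deriv a r ^ 2 * ψ r ^ (m+1)
          - W r * a r ^ 2 * ψ r ^ (m+1)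
          - V r * f r ^ 2 * (deriv (fun s => a s / f s) r) ^ 2 * ψ r ^ (m+1)
          + ((m:ℝ)+1) * (V r * (deriv f r / f r) * (deriv ψ r / ψ r - 1/r) * a r ^ 2
              * ψ r ^ (m+1))) :=
      (intervalIntegral.integral_of_le hble).symm
    have hGder : deriv (fun s => V s * (deriv f s / f s) * a s ^ 2 * ψ s ^ (m+1))
        = fun r => (V r * deriv a r ^ 2 * ψ r ^ (m+1) - W r * a r ^ 2 * ψ r ^ (m+1)
          - V r * f r ^ 2 * (deriv (fun s => a s / f s) r) ^ 2 * ψ r ^ (m+1)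
          + ((m:ℝ)+1) * (V r * (deriv f r / f r) * (deriv ψ r / ψ r - 1/r) * a r ^ 2
              * ψ r ^ (m+1))) :=
      funext fun r => (hPall r).deriv
    have hstep4 : ∫ r in (-b)..b, (V r * deriv a r ^ 2 * ψ r ^ (m+1)
          - W r * a r ^ 2 * ψ r ^ (m+1)
          - V r * f r ^ 2 * (deriv (fun s => a s / f s) r) ^ 2 * ψ r ^ (m+1)
          + ((m:ℝ)+1) * (V r * (deriv f r / f r) * (deriv ψ r / ψ r - 1/r) * a r ^ 2
              * ψ r ^ (m+1)))
        = (fun s => V s * (deriv f s / f s) * a s ^ 2 * ψ s ^ (m+1)) b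
          - (fun s => V s * (deriv f s / f s) * a s ^ 2 * ψ s ^ (m+1)) (-b) := by
      rw [← hGder]
      apply intervalIntegral.integral_deriv_eq_sub
      · intro x _
        exact (hPall x).differentiableAt
      · rw [hGder]
        exact hDc.intervalIntegrable _ _
    have hbK : b ∉ tsupport a := by
      intro h
      have := hKb h
      exact absurd this.2 (lt_irrefl b)
    have hbK' : -b ∉ tsupport a := by
      intro h
      have := hKb h
      exact absurd this.1 (lt_irrefl (-b))
    rw [hstep1, hstep2, hstep3, hstep4]
    simp only []
    rw [hGzero b hbK, hGzero (-b) hbK']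
    ring
  -- split the integral
  have hsplit : (∫ r in S, V r * deriv a r ^ 2 * ψ r ^ (m+1))
      - (∫ r in S, W r * a r ^ 2 * ψ r ^ (m+1))
      - (∫ r in S, V r * f r ^ 2 * (deriv (fun s => a s / f s) r) ^ 2 * ψ r ^ (m+1))
      + ((m:ℝ)+1) * (∫ r in S, V r * (deriv f r / f r) * (deriv ψ r / ψ r - 1/r) * a r ^ 2
          * ψ r ^ (m+1)) = 0 := by
    have s1 : (∫ r in S, (V r * deriv a r ^ 2 * ψ r ^ (m+1) - W r * a r ^ 2 * ψ r ^ (m+1)))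
        = (∫ r in S, V r * deriv a r ^ 2 * ψ r ^ (m+1))
          - ∫ r in S, W r * a r ^ 2 * ψ r ^ (m+1) := integral_sub i1 i2
    have s2 : (∫ r in S, (V r * deriv a r ^ 2 * ψ r ^ (m+1) - W r * a r ^ 2 * ψ r ^ (m+1)
          - V r * f r ^ 2 * (deriv (fun s => a s / f s) r) ^ 2 * ψ r ^ (m+1)))
        = (∫ r in S, (V r * deriv a r ^ 2 * ψ r ^ (m+1) - W r * a r ^ 2 * ψ r ^ (m+1)))
          - ∫ r in S, V r * f r ^ 2 * (deriv (fun s => a s / f s) r) ^ 2 * ψ r ^ (m+1) :=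
      integral_sub (i1.sub i2) i3
    have s3 : (∫ r in S, (V r * deriv a r ^ 2 * ψ r ^ (m+1)
          - W r * a r ^ 2 * ψ r ^ (m+1)
          - V r * f r ^ 2 * (deriv (fun s => a s / f s) r) ^ 2 * ψ r ^ (m+1)
          + ((m:ℝ)+1) * (V r * (deriv f r / f r) * (deriv ψ r / ψ r - 1/r) * a r ^ 2
              * ψ r ^ (m+1))))
        = (∫ r in S, (V r * deriv a r ^ 2 * ψ r ^ (m+1) - W r * a r ^ 2 * ψ r ^ (m+1)
          - V r * f r ^ 2 * (deriv (fun s => a s / f s) r) ^ 2 * ψ r ^ (m+1)))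
          + ∫ r in S, ((m:ℝ)+1) * (V r * (deriv f r / f r) * (deriv ψ r / ψ r - 1/r)
              * a r ^ 2 * ψ r ^ (m+1)) :=
      integral_add ((i1.sub i2).sub i3) (i4.const_mul _)
    have s4 : (∫ r in S, ((m:ℝ)+1) * (V r * (deriv f r / f r) * (deriv ψ r / ψ r - 1/r)
          * a r ^ 2 * ψ r ^ (m+1)))
        = ((m:ℝ)+1) * ∫ r in S, (V r * (deriv f r / f r) * (deriv ψ r / ψ r - 1/r)
          * a r ^ 2 * ψ r ^ (m+1)) := integral_const_mul _ _
    linarith [hzero_int, s1, s2, s3, s4]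
  -- positivity of the singular-weight integral
  have h5 : 0 ≤ ∫ r in S, V r * a r ^ 2 * ψ r ^ ((m:ℤ) - 1) := by
    apply setIntegral_nonneg hSm
    intro r hr
    have := zpow_pos (hψpos r hr) ((m:ℤ) - 1)
    have := (hVpos r hr).le
    positivity
  -- coefficient comparison
  have hcc : (((j + 1) * (m + 2 + j - 1) : ℕ) : ℝ) ≤ ((n * (m + 2 + n - 2) : ℕ) : ℝ) := by
    have : ((j + 1) * (m + 2 + j - 1) : ℕ) ≤ (n * (m + 2 + n - 2) : ℕ) :=
      Nat.mul_le_mul hn (by omega)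
    exact_mod_cast this
  have hcN : ((m + 2 : ℕ) : ℝ) - 1 = (m : ℝ) + 1 := by push_cast; ring
  rw [ge_iff_le, hcN]
  have hmul := mul_le_mul_of_nonneg_right hcc h5
  linarith [hsplit, hmul]
end
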